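/- arXiv:2504.21665 — 8 statements merged into one kernel-verified Lean document; each statement's English description precedes it below -/
import Mathlib

section
/- Let (w_n)_{n≥1} be a positive monotone increasing sequence, let φ_{n,j} ∈ ℝ, and let f = (f_n), g = (g_n) be real sequences. Suppose ∑_{n=1}^∞ ∑_{j=1}^∞ w_{n+j}|φ_{n,j}||f_n||g_j| < ∞. Define (L[f,g])_n := (1/2)∑_{j=1}^{n−1} φ_{n−j,j} f_{n−j} g_j − ∑_{j=1}^∞ φ_{n,j} f_n g_j. Then L[f,g] belongs to the weighted space ℓ¹_w and ‖L[f,g]‖_w ≤ (3/2) ∑_{n=1}^∞ ∑_{j=1}^∞ w_{n+j}|φ_{n,j}||f_n||g_j|, where ‖h‖_w = ∑_{n=1}^∞ w_n |h_n|. -/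
set_option maxHeartbeats 1000000 in
theorem stmt_3
    (w : ℕ → ℝ) (φ : ℕ → ℕ → ℝ) (f g : ℕ → ℝ)
    (hwpos : ∀ n ≥ 1, 0 < w n)
    (hwmono : ∀ n ≥ 1, w n ≤ w (n + 1))
    (hsum : Summable (fun p : ℕ × ℕ =>
      w (p.1 + p.2 + 2) * |φ (p.1 + 1) (p.2 + 1)| * |f (p.1 + 1)| * |g (p.2 + 1)|))
    (L : ℕ → ℝ)
    (hL : ∀ n, L n = (1/2) * ∑ j ∈ Finset.Ico 1 n, φ (n - j) j * f (n - j) * g j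
                     - ∑' j : ℕ, φ n (j + 1) * f n * g (j + 1)) :
    (∀ n ≥ 1, Summable (fun j : ℕ => φ n (j + 1) * f n * g (j + 1))) ∧
    Summable (fun n : ℕ => w (n + 1) * |L (n + 1)|) ∧
    ∑' n : ℕ, w (n + 1) * |L (n + 1)|
      ≤ (3/2) * ∑' p : ℕ × ℕ,
          w (p.1 + p.2 + 2) * |φ (p.1 + 1) (p.2 + 1)| * |f (p.1 + 1)| * |g (p.2 + 1)| := by
  set a : ℕ × ℕ → ℝ := fun p =>
    w (p.1 + p.2 + 2) * |φ (p.1 + 1) (p.2 + 1)| * |f (p.1 + 1)| * |g (p.2 + 1)| with ha_def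
  -- monotonicity chain
  have hW : ∀ m, 1 ≤ m → ∀ k, m ≤ k → w m ≤ w k := by
    intro m hm k hk
    induction k, hk using Nat.le_induction with
    | base => exact le_rfl
    | succ k hk ih => exact ih.trans (hwmono k (le_trans hm hk))
  have hw1 : (0:ℝ) < w 1 := hwpos 1 le_rfl
  have hd_fib : ∀ n, Summable (fun j => a (n, j)) := fun n => hsum.prod_factor n
  -- Part 1
  have part1 : ∀ n ≥ 1, Summable (fun j : ℕ => φ n (j + 1) * f n * g (j + 1)) := by
    intro n hn
    obtain ⟨m, rfl⟩ : ∃ m, n = m + 1 := ⟨n - 1, by omega⟩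
    apply Summable.of_abs
    apply Summable.of_nonneg_of_le (fun j => abs_nonneg _) _ ((hd_fib m).div_const (w 1))
    intro j
    rw [le_div_iff₀ hw1]
    calc |φ (m+1) (j+1) * f (m+1) * g (j+1)| * w 1
        ≤ |φ (m+1) (j+1) * f (m+1) * g (j+1)| * w (m + j + 2) :=
          mul_le_mul_of_nonneg_left (hW 1 le_rfl _ (by omega)) (abs_nonneg _)
      _ = a (m, j) := by simp only [ha_def, abs_mul]; ring
  refine ⟨part1, ?_⟩
  -- sum along antidiagonals
  have hsig : Summable (fun x : Σ n : ℕ, Finset.HasAntidiagonal.antidiagonal n => a x.2) :=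
    (Finset.HasAntidiagonal.sigmaAntidiagonalEquivProd.summable_iff (f := a)).2 hsum
  set c : ℕ → ℝ := fun n => ∑ p ∈ Finset.HasAntidiagonal.antidiagonal n, a p with hc_def
  have hc_sum : Summable c := by
    refine (hsig.sigma' fun n => (hasSum_fintype _).summable).congr fun n => ?_
    exact (Finset.tsum_subtype _ a)
  have hc_tsum : ∑' n, c n = ∑' p, a p := by
    calc ∑' n, c n = ∑' (n : ℕ) (p : Finset.HasAntidiagonal.antidiagonal n), a ↑p :=
          tsum_congr fun n => (Finset.tsum_subtype _ a).symm
      _ = ∑' x : Σ n : ℕ, Finset.HasAntidiagonal.antidiagonal n, a ↑x.2 :=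
          (Summable.tsum_sigma' (fun n => (hasSum_fintype _).summable) hsig).symm
      _ = ∑' p, a p := Finset.HasAntidiagonal.sigmaAntidiagonalEquivProd.tsum_eq a
  -- marginal sums
  have hprod : HasSum (fun n => ∑' j, a (n, j)) (∑' p, a p) :=
    hsum.hasSum.prod_fiberwise fun n => (hd_fib n).hasSum
  set d : ℕ → ℝ := fun n => ∑' j, a (n, j) with hd_def
  set C : ℕ → ℝ := fun n =>
    ∑ j ∈ Finset.Ico 1 (n+1), w (n+1) * (|φ (n+1-j) j| * |f (n+1-j)| * |g j|) with hC_def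
  have hCc : ∀ m, C (m+1) = c m := by
    intro m
    simp only [hC_def, hc_def]
    refine Finset.sum_nbij' (i := fun j => (m+1-j, j-1)) (j := fun p => p.2+1)
      (fun j hj => ?_) (fun p hp => ?_) (fun j hj => ?_) (fun p hp => ?_) (fun j hj => ?_)
    · rw [Finset.mem_Ico] at hj; rw [Finset.HasAntidiagonal.mem_antidiagonal]; dsimp only; omega
    · obtain ⟨p1, p2⟩ := p
      rw [Finset.HasAntidiagonal.mem_antidiagonal] at hp; rw [Finset.mem_Ico]; dsimp only at hp ⊢; omega
    · rw [Finset.mem_Ico] at hj; dsimp only; omega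
    · obtain ⟨p1, p2⟩ := p
      rw [Finset.HasAntidiagonal.mem_antidiagonal] at hp
      dsimp only at hp ⊢
      rw [Prod.mk.injEq]
      constructor <;> omega
    · rw [Finset.mem_Ico] at hj
      have e1 : m+1-j+(j-1)+2 = m+1+1 := by omega
      have e2 : m+1-j+1 = m+1+1-j := by omega
      have e3 : j-1+1 = j := by omega
      simp only [ha_def, e1, e2, e3]
      ring
  -- key pointwise bound
  have key : ∀ n, w (n+1) * |L (n+1)| ≤ (1/2) * C n + d n := by
    intro n
    have hsum2 : Summable (fun j : ℕ => |φ (n+1) (j + 1) * f (n+1) * g (j + 1)|) :=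
      (part1 (n+1) (by omega)).abs
    have h1 : |L (n+1)| ≤
        (1/2) * |∑ j ∈ Finset.Ico 1 (n+1), φ (n+1-j) j * f (n+1-j) * g j|
          + |∑' j : ℕ, φ (n+1) (j + 1) * f (n+1) * g (j + 1)| := by
      rw [hL]
      refine (abs_sub _ _).trans ?_
      rw [abs_mul]
      gcongr
      rw [abs_of_nonneg]; norm_num
    have hwn : (0:ℝ) ≤ w (n+1) := (hwpos (n+1) (by omega)).le
    have h2 : w (n+1) * |∑ j ∈ Finset.Ico 1 (n+1), φ (n+1-j) j * f (n+1-j) * g j| ≤ C n := by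
      simp only [hC_def]
      rw [← Finset.mul_sum]
      refine mul_le_mul_of_nonneg_left ?_ hwn
      refine (Finset.abs_sum_le_sum_abs _ _).trans_eq (Finset.sum_congr rfl fun j hj => ?_)
      rw [abs_mul, abs_mul]
    have h3 : w (n+1) * |∑' j : ℕ, φ (n+1) (j + 1) * f (n+1) * g (j + 1)| ≤ d n := by
      have habs : |∑' j : ℕ, φ (n+1) (j + 1) * f (n+1) * g (j + 1)|
          ≤ ∑' j : ℕ, |φ (n+1) (j + 1) * f (n+1) * g (j + 1)| := by
        simpa only [Real.norm_eq_abs] using norm_tsum_le_tsum_norm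
          (f := fun j : ℕ => φ (n+1) (j + 1) * f (n+1) * g (j + 1)) (by simpa only [Real.norm_eq_abs] using hsum2)
      calc w (n+1) * |∑' j : ℕ, φ (n+1) (j + 1) * f (n+1) * g (j + 1)|
          ≤ w (n+1) * ∑' j : ℕ, |φ (n+1) (j + 1) * f (n+1) * g (j + 1)| :=
            mul_le_mul_of_nonneg_left habs hwn
        _ = ∑' j : ℕ, w (n+1) * |φ (n+1) (j + 1) * f (n+1) * g (j + 1)| := by
            rw [tsum_mul_left]
        _ ≤ ∑' j, a (n, j) := by
            refine Summable.tsum_le_tsum (fun j => ?_) (hsum2.mul_left _) (hd_fib n)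
            have hle : w (n+1) ≤ w (n + j + 2) := hW (n+1) (by omega) _ (by omega)
            calc w (n+1) * |φ (n+1) (j + 1) * f (n+1) * g (j + 1)|
                ≤ w (n+j+2) * |φ (n+1) (j + 1) * f (n+1) * g (j + 1)| :=
                  mul_le_mul_of_nonneg_right hle (abs_nonneg _)
              _ = a (n, j) := by simp only [ha_def, abs_mul]; ring
    calc w (n+1) * |L (n+1)|
        ≤ w (n+1) * ((1/2) * |∑ j ∈ Finset.Ico 1 (n+1), φ (n+1-j) j * f (n+1-j) * g j|
            + |∑' j : ℕ, φ (n+1) (j + 1) * f (n+1) * g (j + 1)|) :=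
          mul_le_mul_of_nonneg_left h1 hwn
      _ = (1/2) * (w (n+1) * |∑ j ∈ Finset.Ico 1 (n+1), φ (n+1-j) j * f (n+1-j) * g j|)
            + w (n+1) * |∑' j : ℕ, φ (n+1) (j + 1) * f (n+1) * g (j + 1)| := by ring
      _ ≤ (1/2) * C n + d n := by gcongr
  -- summability of the upper bound
  have hC_sum : Summable C := by
    rw [← summable_nat_add_iff 1]
    exact hc_sum.congr fun n => (hCc n).symm
  have hu_sum : Summable (fun n => (1/2) * C n + d n) :=
    (hC_sum.mul_left _).add hprod.summable
  have hb_sum : Summable (fun n : ℕ => w (n + 1) * |L (n + 1)|) := by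
    refine Summable.of_nonneg_of_le (fun n => ?_) key hu_sum
    exact mul_nonneg (hwpos (n+1) (by omega)).le (abs_nonneg _)
  refine ⟨hb_sum, ?_⟩
  have hC_tsum : ∑' n, C n = ∑' p, a p := by
    rw [Summable.tsum_eq_zero_add hC_sum]
    have h0 : C 0 = 0 := by simp [hC_def]
    rw [h0, zero_add, tsum_congr hCc, hc_tsum]
  calc ∑' n : ℕ, w (n + 1) * |L (n + 1)|
      ≤ ∑' n, ((1/2) * C n + d n) := Summable.tsum_le_tsum key hb_sum hu_sum
    _ = (1/2) * (∑' n, C n) + ∑' n, d n := by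
        rw [Summable.tsum_add (hC_sum.mul_left _) hprod.summable, tsum_mul_left]
    _ = (3/2) * ∑' p, a p := by rw [hC_tsum, hprod.tsum_eq]; ring
end

section
/- Let (ω_n)_{n≥1} be positive reals, (k_{n,j}) symmetric nonnegative reals (k_{n,j} = k_{j,n}), and (f_n) a real sequence such that ∑_{n=1}^∞ ∑_{j=1}^∞ ω_{n+j} k_{n,j} |f_n f_j| < ∞ and ∑_{n=1}^∞ ∑_{j=1}^∞ ω_n k_{n,j} |f_n f_j| < ∞. Define K_n := (1/2)∑_{j=1}^{n−1} k_{n−j,j} f_{n−j} f_j − ∑_{j=1}^∞ k_{n,j} f_n f_j. Then ∑_{n=1}^∞ ω_n K_n = (1/2) ∑_{n=1}^∞ ∑_{j=1}^∞ (ω_{n+j} − ω_n − ω_j) k_{n,j} f_n f_j. -/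
open Finset

private lemma aux_sigma (g : ℕ × ℕ → ℝ) (hg : Summable g) :
    Summable (fun x : Σ n : ℕ, antidiagonal n => g x.2) :=
  Finset.HasAntidiagonal.sigmaAntidiagonalEquivProd.summable_iff.mpr hg

private lemma aux_summable_antidiag (g : ℕ × ℕ → ℝ) (hg : Summable g) :
    Summable (fun n => ∑ p ∈ antidiagonal n, g p) := by
  have h := aux_sigma g hg
  conv => congr; ext; rw [← Finset.sum_finset_coe, ← tsum_fintype (L := .unconditional _)]
  exact h.sigma' fun n => (hasSum_fintype _).summable

private lemma aux_tsum_antidiag (g : ℕ × ℕ → ℝ) (hg : Summable g) :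
    ∑' n, ∑ p ∈ antidiagonal n, g p = ∑' p, g p := by
  conv_lhs => congr; ext; rw [← Finset.sum_finset_coe, ← tsum_fintype (L := .unconditional _)]
  rw [← Finset.HasAntidiagonal.sigmaAntidiagonalEquivProd.tsum_eq g]
  exact (Summable.tsum_sigma' (fun n => (hasSum_fintype _).summable) (aux_sigma g hg)).symm

theorem stmt_4
    (ω : ℕ → ℝ) (k : ℕ → ℕ → ℝ) (f : ℕ → ℝ)
    (hω : ∀ n ≥ 1, 0 < ω n)
    (hknonneg : ∀ n j, 0 ≤ k n j)
    (hksymm : ∀ n j, k n j = k j n)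
    (hsum1 : Summable (fun p : ℕ × ℕ =>
      ω (p.1 + p.2 + 2) * k (p.1 + 1) (p.2 + 1) * |f (p.1 + 1) * f (p.2 + 1)|))
    (hsum2 : Summable (fun p : ℕ × ℕ =>
      ω (p.1 + 1) * k (p.1 + 1) (p.2 + 1) * |f (p.1 + 1) * f (p.2 + 1)|))
    (K : ℕ → ℝ)
    (hK : ∀ n, K n = (1/2) * ∑ j ∈ Finset.Ico 1 n, k (n - j) j * f (n - j) * f j
                     - ∑' j : ℕ, k n (j + 1) * f n * f (j + 1)) :
    ∑' n : ℕ, ω (n + 1) * K (n + 1)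
      = (1/2) * ∑' p : ℕ × ℕ,
          (ω (p.1 + p.2 + 2) - ω (p.1 + 1) - ω (p.2 + 1))
            * k (p.1 + 1) (p.2 + 1) * f (p.1 + 1) * f (p.2 + 1) := by
  set g1 : ℕ × ℕ → ℝ := fun p =>
    ω (p.1 + p.2 + 2) * k (p.1 + 1) (p.2 + 1) * f (p.1 + 1) * f (p.2 + 1) with hg1def
  set g2 : ℕ × ℕ → ℝ := fun p =>
    ω (p.1 + 1) * k (p.1 + 1) (p.2 + 1) * f (p.1 + 1) * f (p.2 + 1) with hg2def
  set g3 : ℕ × ℕ → ℝ := fun p =>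
    ω (p.2 + 1) * k (p.1 + 1) (p.2 + 1) * f (p.1 + 1) * f (p.2 + 1) with hg3def
  -- summability of g1
  have habs1 : ∀ p : ℕ × ℕ,
      ω (p.1 + p.2 + 2) * k (p.1 + 1) (p.2 + 1) * |f (p.1 + 1) * f (p.2 + 1)| = |g1 p| := by
    intro p
    rw [hg1def]
    simp only [abs_mul]
    rw [abs_of_nonneg (le_of_lt (hω _ (by omega))), abs_of_nonneg (hknonneg _ _)]
    ring
  have hg1 : Summable g1 := summable_abs_iff.mp ((summable_congr habs1).mp hsum1)
  have habs2 : ∀ p : ℕ × ℕ,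
      ω (p.1 + 1) * k (p.1 + 1) (p.2 + 1) * |f (p.1 + 1) * f (p.2 + 1)| = |g2 p| := by
    intro p
    rw [hg2def]
    simp only [abs_mul]
    rw [abs_of_nonneg (le_of_lt (hω _ (by omega))), abs_of_nonneg (hknonneg _ _)]
    ring
  have hg2 : Summable g2 := summable_abs_iff.mp ((summable_congr habs2).mp hsum2)
  have hswap : ∀ p : ℕ × ℕ, g2 (p.2, p.1) = g3 p := by
    intro p
    simp only [hg2def, hg3def]
    rw [hksymm (p.2 + 1) (p.1 + 1)]
    ring
  have hg3 : Summable g3 := by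
    have h := (Equiv.prodComm ℕ ℕ).summable_iff.mpr hg2
    exact h.congr hswap
  have htsum3 : ∑' p, g3 p = ∑' p, g2 p := by
    rw [← (Equiv.prodComm ℕ ℕ).tsum_eq g2]
    exact tsum_congr fun p => (hswap p).symm
  -- the gain sequence
  set h : ℕ → ℝ := fun n => if n = 0 then 0 else ∑ p ∈ antidiagonal (n - 1), g1 p with hhdef
  have hhsucc : ∀ n, h (n + 1) = ∑ p ∈ antidiagonal n, g1 p := by
    intro n; simp [hhdef]
  have hS : Summable (fun n => ∑ p ∈ antidiagonal n, g1 p) := aux_summable_antidiag g1 hg1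
  have hh : Summable h := (summable_nat_add_iff 1).mp (hS.congr fun n => (hhsucc n).symm)
  have htsumh : ∑' n, h n = ∑' p, g1 p := by
    rw [Summable.tsum_eq_zero_add hh]
    simp only [hhsucc]
    rw [aux_tsum_antidiag g1 hg1]
    simp [hhdef]
  -- per-n identity for the gain term
  have hgain : ∀ n : ℕ,
      ω (n + 1) * ∑ j ∈ Finset.Ico 1 (n + 1), k (n + 1 - j) j * f (n + 1 - j) * f j = h n := by
    intro n
    cases n with
    | zero => simp [hhdef]
    | succ m =>
      rw [hhsucc m, Finset.Nat.sum_antidiagonal_eq_sum_range_succ_mk, Finset.mul_sum,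
        Finset.sum_Ico_eq_sum_range]
      have hcard : m + 1 + 1 - 1 = m + 1 := by omega
      rw [hcard, ← Finset.sum_range_reflect (fun j => g1 (j, m - j)) (m + 1)]
      refine Finset.sum_congr rfl fun i hi => ?_
      have him : i ≤ m := by simpa using Nat.lt_succ_iff.mp (Finset.mem_range.mp hi)
      have e1 : m + 1 - 1 - i = m - i := by omega
      have e2 : m - (m - i) = i := by omega
      have e3 : m + 1 + 1 - (1 + i) = (m - i) + 1 := by omega
      have e4 : (m - i) + i + 2 = m + 1 + 1 := by omega
      rw [e1, hg1def]
      simp only [e2, e3, e4]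
      have e5 : 1 + i = i + 1 := by omega
      rw [e5]
      ring
  -- per-n identity for the loss term
  have hloss : ∀ n : ℕ,
      ω (n + 1) * ∑' j : ℕ, k (n + 1) (j + 1) * f (n + 1) * f (j + 1)
        = ∑' j : ℕ, g2 (n, j) := by
    intro n
    rw [← tsum_mul_left]
    refine tsum_congr fun j => ?_
    rw [hg2def]
    ring
  have hTsummable : Summable (fun n => ∑' j : ℕ, g2 (n, j)) := hg2.prod
  have hkey : ∀ n : ℕ, ω (n + 1) * K (n + 1) = (1/2) * h n - ∑' j : ℕ, g2 (n, j) := by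
    intro n
    rw [hK (n + 1), mul_sub, ← hloss n, ← hgain n]
    ring
  have hsplit : Summable (fun n => (1/2 : ℝ) * h n) := hh.mul_left _
  calc ∑' n : ℕ, ω (n + 1) * K (n + 1)
      = ∑' n : ℕ, ((1/2) * h n - ∑' j : ℕ, g2 (n, j)) := tsum_congr hkey
    _ = (1/2) * ∑' p, g1 p - ∑' p, g2 p := by
        rw [Summable.tsum_sub hsplit hTsummable, tsum_mul_left, htsumh, ← Summable.tsum_prod hg2]
    _ = (1/2) * ∑' p : ℕ × ℕ,
          (ω (p.1 + p.2 + 2) - ω (p.1 + 1) - ω (p.2 + 1))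
            * k (p.1 + 1) (p.2 + 1) * f (p.1 + 1) * f (p.2 + 1) := by
        have hterm : ∀ p : ℕ × ℕ,
            (ω (p.1 + p.2 + 2) - ω (p.1 + 1) - ω (p.2 + 1))
              * k (p.1 + 1) (p.2 + 1) * f (p.1 + 1) * f (p.2 + 1)
            = g1 p - g2 p - g3 p := by
          intro p
          simp only [hg1def, hg2def, hg3def]
          ring
        rw [tsum_congr hterm, Summable.tsum_sub (hg1.sub hg2) hg3, Summable.tsum_sub hg1 hg2, htsum3]
        ring
end

section
/- Let p > 1 and set c_p := p if p ∈ (1,2] and c_p := 2^p − 2 if p > 2. Then for all x, y ∈ (0,∞), (x+y)·((x+y)^p − x^p − y^p) ≤ c_p (x^p y + x y^p). -/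
open Real Set

lemma rpow_subadd {q a b : ℝ} (hq0 : 0 ≤ q) (hq1 : q ≤ 1) (ha : 0 ≤ a) (hb : 0 ≤ b) :
    (a + b) ^ q ≤ a ^ q + b ^ q := by
  have h := NNReal.rpow_add_le_add_rpow a.toNNReal b.toNNReal hq0 hq1
  have h2 := NNReal.coe_le_coe.2 h
  rwa [NNReal.coe_rpow, NNReal.coe_add, NNReal.coe_add, NNReal.coe_rpow, NNReal.coe_rpow,
    Real.coe_toNNReal a ha, Real.coe_toNNReal b hb] at h2

lemma two_rpow_lt {p : ℝ} (hp : 2 < p) : (2:ℝ)^(p-1) * (3-p) < 2 := by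
  rcases le_or_gt 3 p with h3 | h3
  · have h := Real.rpow_pos_of_pos two_pos (p-1)
    nlinarith
  · have hB : (2:ℝ)^(p-2) ≤ p - 1 := by
      have hconv := convexOn_exp.2 (Set.mem_univ (0:ℝ)) (Set.mem_univ (Real.log 2))
        (show (0:ℝ) ≤ 3-p by linarith) (show (0:ℝ) ≤ p-2 by linarith) (by ring)
      simp only [smul_eq_mul, mul_zero, zero_add, Real.exp_zero, Real.exp_log two_pos] at hconv
      rw [Real.rpow_def_of_pos two_pos]
      calc Real.exp (Real.log 2 * (p-2)) = Real.exp ((p-2) * Real.log 2) := by ring_nf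
        _ ≤ (3-p)*1 + (p-2)*2 := hconv
        _ = p - 1 := by ring
    have h21 : (2:ℝ)^(p-1) = 2 * 2^(p-2) := by
      rw [show p-1 = 1 + (p-2) by ring, Real.rpow_add two_pos, Real.rpow_one]
    rw [h21]
    nlinarith [mul_pos (sub_pos.2 hp) (sub_pos.2 hp)]

lemma chi_le {p : ℝ} (hp : 1 < p) (hp2 : p ≤ 2) {x y : ℝ} (hx : 0 < x) (hy : 0 < y) :
    (x + y) ^ p - x ^ p - y ^ p ≤ p * x ^ (p - 1) * y := by
  set g : ℝ → ℝ := fun t => x ^ p + p * x ^ (p-1) * t + t ^ p - (x + t) ^ p with hg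
  have hgd : ∀ t : ℝ, HasDerivAt g
      (p * x^(p-1) + p * t^(p-1) - p * (x+t)^(p-1)) t := by
    intro t
    have h1 : HasDerivAt (fun t : ℝ => t ^ p) (p * t^(p-1)) t :=
      Real.hasDerivAt_rpow_const (Or.inr hp.le)
    have h2 : HasDerivAt (fun t : ℝ => (x + t) ^ p) (1 * p * (x+t)^(p-1)) t :=
      ((hasDerivAt_id t).const_add x).rpow_const (Or.inr hp.le)
    have H := (((hasDerivAt_const t (x^p)).add
      ((hasDerivAt_id t).const_mul (p * x^(p-1)))).add h1).sub h2
    refine HasDerivAt.congr_deriv H ?_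
    ring
  have hmono : MonotoneOn g (Set.Ici (0:ℝ)) := by
    apply monotoneOn_of_deriv_nonneg (convex_Ici 0)
    · exact fun t _ => (hgd t).continuousAt.continuousWithinAt
    · exact fun t _ => (hgd t).differentiableAt.differentiableWithinAt
    · intro t ht
      rw [interior_Ici] at ht
      rw [(hgd t).deriv]
      have hsub : (x + t)^(p-1) ≤ x^(p-1) + t^(p-1) :=
        rpow_subadd (by linarith) (by linarith) hx.le (le_of_lt ht)
      have := mul_le_mul_of_nonneg_left hsub (show (0:ℝ) ≤ p by linarith)
      linarith
  have h0 : g 0 = 0 := by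
    simp [hg, Real.zero_rpow (show p ≠ 0 by linarith)]
  have hgy := hmono Set.self_mem_Ici (Set.mem_Ici.2 hy.le) hy.le
  rw [h0] at hgy
  simp only [hg] at hgy
  linarith


lemma Kineq {p y : ℝ} (hp : 2 < p) (hy : 0 < y) {z : ℝ} (hz : 0 < z) :
    (p-1)*z*((z+y)^(p-2) - z^(p-2)) < (p-2)*((z+y)^(p-1) - z^(p-1)) := by
  have hp1 : 1 < p := by linarith
  set s : ℝ := z + y with hs'
  have hs : 0 < s := by positivity
  have hzs : z < s := by simp [hs']; linarith
  have hr1 : z/s < 1 := (div_lt_one hs).2 hzs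
  have hr0 : 0 < z/s := div_pos hz hs
  have hb := one_add_mul_self_lt_rpow_one_add (s := z/s - 1) (by linarith)
    (sub_ne_zero.2 (ne_of_lt hr1)) (p := p-1) (by linarith)
  rw [show 1 + (z/s - 1) = z/s by ring] at hb
  have hsp1 : (0:ℝ) < s^(p-1) := Real.rpow_pos_of_pos hs _
  have hbm := mul_lt_mul_of_pos_right hb hsp1
  rw [Real.div_rpow hz.le hs.le, div_mul_cancel₀ _ (ne_of_gt hsp1)] at hbm
  have e3 : s^(p-1) = s^(p-2) * s := by
    rw [← Real.rpow_add_one hs.ne', show p-2+1 = p-1 by ring]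
  have elhs : (1 + (p-1)*(z/s-1)) * s^(p-1) = s^(p-1) - (p-1)*((s-z)*s^(p-2)) := by
    rw [e3]
    field_simp
    ring
  rw [elhs] at hbm
  have e5 : z * z^(p-2) = z^(p-1) := by
    rw [mul_comm, ← Real.rpow_add_one hz.ne', show p-2+1 = p-1 by ring]
  have e6 : s * s^(p-2) = s^(p-1) := by
    rw [mul_comm, ← Real.rpow_add_one hs.ne', show p-2+1 = p-1 by ring]
  have hint1 : p * (z * z^(p-2)) = p * z^(p-1) := by rw [e5]
  have hint2 : p * (s * s^(p-2)) = p * s^(p-1) := by rw [e6]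
  linarith [hbm, e5, e6, hint1, hint2]

lemma key_gt2 {p : ℝ} (hp : 2 < p) {x y : ℝ} (hx : 0 < x) (hy : 0 < y) (hxy : x ≤ y) :
    (x+y)^(p+1) - x^(p+1) - y^(p+1) ≤ ((2:ℝ)^p - 1) * (x^p * y + x * y^p) := by
  have hp1 : 1 < p := by linarith
  have hp0 : 0 < p := by linarith
  set C : ℝ := (2:ℝ)^p - 1 with hC
  set F : ℝ → ℝ := fun z => (z+y)^(p+1) - z^(p+1) - y^(p+1) - C*(z^p*y + z*y^p) with hF
  set G : ℝ → ℝ := fun z => (p+1)*(z+y)^p - (p+1)*z^p - C*(p*z^(p-1)*y + y^p) with hG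
  set ψ : ℝ → ℝ := fun z => (p+1)*((z+y)^(p-1) - z^(p-1))*z^(2-p) - C*(p-1)*y with hψ
  have hFd : ∀ z : ℝ, HasDerivAt F (G z) z := by
    intro z
    have t1 : HasDerivAt (fun z : ℝ => (z+y)^(p+1)) (1 * (p+1) * (z+y)^(p+1-1)) z :=
      ((hasDerivAt_id z).add_const y).rpow_const (Or.inr (by linarith))
    have t2 : HasDerivAt (fun z : ℝ => z^(p+1)) ((p+1) * z^(p+1-1)) z :=
      Real.hasDerivAt_rpow_const (Or.inr (by linarith))
    have t3 : HasDerivAt (fun z : ℝ => z^p) (p * z^(p-1)) z :=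
      Real.hasDerivAt_rpow_const (Or.inr hp1.le)
    have t4 : HasDerivAt (fun z : ℝ => C*(z^p*y + z*y^p))
        (C*((p*z^(p-1))*y + 1*y^p)) z :=
      ((t3.mul_const y).add ((hasDerivAt_id z).mul_const (y^p))).const_mul C
    have H := ((t1.sub t2).sub (hasDerivAt_const z (y^(p+1)))).sub t4
    refine HasDerivAt.congr_deriv H ?_
    rw [show p+1-1 = p by ring]
    simp only [hG]
    ring
  have hGd : ∀ z : ℝ, 0 < z → HasDerivAt G (p * z^(p-2) * ψ z) z := by
    intro z hz
    have t1 : HasDerivAt (fun z : ℝ => (z+y)^p) (1 * p * (z+y)^(p-1)) z :=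
      ((hasDerivAt_id z).add_const y).rpow_const (Or.inr hp1.le)
    have t2 : HasDerivAt (fun z : ℝ => z^p) (p * z^(p-1)) z :=
      Real.hasDerivAt_rpow_const (Or.inr hp1.le)
    have t3 : HasDerivAt (fun z : ℝ => z^(p-1)) ((p-1) * z^(p-1-1)) z :=
      Real.hasDerivAt_rpow_const (Or.inl hz.ne')
    have t4 : HasDerivAt (fun z : ℝ => C*(p*z^(p-1)*y + y^p))
        (C*((p*((p-1) * z^(p-1-1)))*y + 0)) z :=
      (((t3.const_mul p).mul_const y).add (hasDerivAt_const z (y^p))).const_mul C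
    have H := ((t1.const_mul (p+1)).sub (t2.const_mul (p+1))).sub t4
    refine HasDerivAt.congr_deriv H ?_
    rw [show p-1-1 = p-2 by ring]
    have e1 : z^(p-2) * z^(2-p) = 1 := by
      rw [← Real.rpow_add hz, show (p-2)+(2-p) = (0:ℝ) by ring, Real.rpow_zero]
    simp only [hψ]
    have expand : p * z^(p-2) * ((p+1)*((z+y)^(p-1) - z^(p-1))*z^(2-p) - C*(p-1)*y)
        = p*(p+1)*(z+y)^(p-1)*(z^(p-2)*z^(2-p))
          - p*(p+1)*z^(p-1)*(z^(p-2)*z^(2-p)) - C*p*(p-1)*z^(p-2)*y := by ring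
    rw [expand, e1]
    ring
  have hψd : ∀ z : ℝ, 0 < z → HasDerivAt ψ
      ((p+1)*(1*(p-1)*(z+y)^(p-1-1) - (p-1)*z^(p-1-1)) * z^(2-p)
       + (p+1)*((z+y)^(p-1) - z^(p-1)) * ((2-p)*z^(2-p-1))) z := by
    intro z hz
    have hA : HasDerivAt (fun z : ℝ => (p+1)*((z+y)^(p-1) - z^(p-1)))
        ((p+1)*(1*(p-1)*(z+y)^(p-1-1) - (p-1)*z^(p-1-1))) z :=
      ((((hasDerivAt_id z).add_const y).rpow_const (Or.inr (by linarith))).sub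
        (Real.hasDerivAt_rpow_const (Or.inl hz.ne'))).const_mul (p+1)
    have hB : HasDerivAt (fun z : ℝ => z^(2-p)) ((2-p)*z^(2-p-1)) z :=
      Real.hasDerivAt_rpow_const (Or.inl hz.ne')
    exact (hA.mul hB).sub_const (C*(p-1)*y)
  have hψanti : StrictAntiOn ψ (Set.Ioi (0:ℝ)) := by
    apply strictAntiOn_of_deriv_neg (convex_Ioi 0)
      (fun z hz => (hψd z hz).continuousAt.continuousWithinAt)
    intro z hz
    rw [interior_Ioi] at hz
    have hz' : (0:ℝ) < z := hz
    rw [(hψd z hz').deriv]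
    have e2 : z^(2-p) = z^(1-p) * z := by
      rw [← Real.rpow_add_one hz'.ne', show 1-p+1 = 2-p by ring]
    have hK := Kineq hp hy hz'
    have hzp : (0:ℝ) < z^(1-p) := Real.rpow_pos_of_pos hz' _
    have hfac : (p+1)*(1*(p-1)*(z+y)^(p-1-1) - (p-1)*z^(p-1-1)) * z^(2-p)
       + (p+1)*((z+y)^(p-1) - z^(p-1)) * ((2-p)*z^(2-p-1))
       = ((p+1)*z^(1-p)) * ((p-1)*z*((z+y)^(p-2) - z^(p-2))
           - (p-2)*((z+y)^(p-1) - z^(p-1))) := by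
      rw [e2, show (2:ℝ)-p-1 = 1-p by ring, show p-1-1 = p-2 by ring]
      ring
    rw [hfac]
    exact mul_neg_of_pos_of_neg (mul_pos (by linarith) hzp) (by linarith)
  -- special values
  have e7 : y^(p-1) * y^(2-p) = y := by
    rw [← Real.rpow_add hy, show p-1+(2-p) = (1:ℝ) by ring, Real.rpow_one]
  have e8 : (2:ℝ)^p = 2 * 2^(p-1) := by
    conv_lhs => rw [show p = 1+(p-1) by ring]
    rw [Real.rpow_add two_pos, Real.rpow_one]
  have e9 : y^(p-1) * y = y^p := by
    rw [← Real.rpow_add_one hy.ne', show p-1+1 = p by ring]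
  have e11 : y^p * y = y^(p+1) := by rw [← Real.rpow_add_one hy.ne']
  have hmr : (y+y)^(p-1) = 2^(p-1) * y^(p-1) := by
    rw [show y+y = 2*y by ring, Real.mul_rpow (by norm_num) hy.le]
  have hmr2 : (y+y)^p = 2^p * y^p := by
    rw [show y+y = 2*y by ring, Real.mul_rpow (by norm_num) hy.le]
  have hmr3 : (y+y)^(p+1) = 2^(p+1) * y^(p+1) := by
    rw [show y+y = 2*y by ring, Real.mul_rpow (by norm_num) hy.le]
  have e12 : (2:ℝ)^(p+1) = 2^p * 2 := Real.rpow_add_one (by norm_num) p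
  have hψy : ψ y < 0 := by
    have hval : ψ y = y * ((2:ℝ)^(p-1)*(3-p) - 2) := by
      simp only [hψ, hC]
      rw [hmr, e8]
      linear_combination ((p+1) * ((2:ℝ)^(p-1) - 1)) * e7
    rw [hval]
    exact mul_neg_of_pos_of_neg hy (by linarith [two_rpow_lt hp])
  have hGy : G y = 0 := by
    simp only [hG, hC]
    rw [hmr2]
    linear_combination (-((2:ℝ)^p - 1) * p) * e9
  have hF0 : F 0 = 0 := by
    simp only [hF]
    rw [zero_add, Real.zero_rpow (by linarith : p+1 ≠ 0), Real.zero_rpow (by linarith : p ≠ 0)]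
    ring
  have hFy : F y = 0 := by
    simp only [hF, hC]
    rw [hmr3, e12]
    linear_combination (-2*((2:ℝ)^p - 1)) * e11
  have hFcont : Continuous F := by
    have c1 : Continuous fun z : ℝ => (z+y)^(p+1) :=
      (continuous_id.add continuous_const).rpow_const (fun z => Or.inr (by linarith))
    have c2 : Continuous fun z : ℝ => z^(p+1) :=
      continuous_id.rpow_const (fun z => Or.inr (by linarith))
    have c3 : Continuous fun z : ℝ => z^p :=
      continuous_id.rpow_const (fun z => Or.inr (by linarith))
    exact ((c1.sub c2).sub continuous_const).sub
      (continuous_const.mul ((c3.mul continuous_const).add (continuous_id.mul continuous_const)))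
  have hGcont : Continuous G := by
    have c1 : Continuous fun z : ℝ => (z+y)^p :=
      (continuous_id.add continuous_const).rpow_const (fun z => Or.inr (by linarith))
    have c3 : Continuous fun z : ℝ => z^p :=
      continuous_id.rpow_const (fun z => Or.inr (by linarith))
    have c4 : Continuous fun z : ℝ => z^(p-1) :=
      continuous_id.rpow_const (fun z => Or.inr (by linarith))
    exact ((continuous_const.mul c1).sub (continuous_const.mul c3)).sub
      (continuous_const.mul (((continuous_const.mul c4).mul continuous_const).add
        continuous_const))
  -- maximum argument
  obtain ⟨c, hcmem, hcmax⟩ := isCompact_Icc.exists_isMaxOn (Set.nonempty_Icc.2 hy.le)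
    hFcont.continuousOn
  have hFxc : F x ≤ F c := hcmax ⟨hx.le, hxy⟩
  have hFc : F c ≤ 0 := by
    obtain ⟨hc0, hcy⟩ := hcmem
    rcases eq_or_lt_of_le hc0 with rfl | hc0'
    · exact hF0.le
    · rcases eq_or_lt_of_le hcy with rfl | hcy'
      · exact hFy.le
      · have hloc : IsLocalMax F c := hcmax.isLocalMax (Icc_mem_nhds hc0' hcy')
        have hGc0 : G c = 0 := hloc.hasDerivAt_eq_zero (hFd c)
        by_cases hψc : ψ c ≤ 0
        · exfalso
          have hanti : StrictAntiOn G (Set.Icc c y) := by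
            apply strictAntiOn_of_deriv_neg (convex_Icc c y) hGcont.continuousOn
            intro z hz
            rw [interior_Icc] at hz
            have hzpos : (0:ℝ) < z := hc0'.trans hz.1
            rw [(hGd z hzpos).deriv]
            have hψz : ψ z < ψ c := hψanti (Set.mem_Ioi.2 hc0') (Set.mem_Ioi.2 hzpos) hz.1
            exact mul_neg_of_pos_of_neg (mul_pos hp0 (Real.rpow_pos_of_pos hzpos _))
              (by linarith)
          have := hanti (Set.left_mem_Icc.2 hcy'.le) (Set.right_mem_Icc.2 hcy'.le) hcy'
          rw [hGc0, hGy] at this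
          exact lt_irrefl 0 this
        · push_neg at hψc
          have hmono : StrictMonoOn G (Set.Icc 0 c) := by
            apply strictMonoOn_of_deriv_pos (convex_Icc 0 c) hGcont.continuousOn
            intro z hz
            rw [interior_Icc] at hz
            rw [(hGd z hz.1).deriv]
            have hψz : ψ c < ψ z := hψanti (Set.mem_Ioi.2 hz.1) (Set.mem_Ioi.2 hc0') hz.2
            exact mul_pos (mul_pos hp0 (Real.rpow_pos_of_pos hz.1 _)) (hψc.trans hψz)
          have hFanti : StrictAntiOn F (Set.Icc 0 c) := by
            apply strictAntiOn_of_deriv_neg (convex_Icc 0 c) hFcont.continuousOn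
            intro z hz
            rw [interior_Icc] at hz
            rw [(hFd z).deriv]
            have := hmono (Set.mem_Icc.2 ⟨hz.1.le, hz.2.le⟩)
              (Set.right_mem_Icc.2 hc0'.le) hz.2
            rw [hGc0] at this
            exact this
          have := hFanti (Set.left_mem_Icc.2 hc0'.le) (Set.right_mem_Icc.2 hc0'.le) hc0'
          rw [hF0] at this
          exact this.le
  have hFx : F x ≤ 0 := hFxc.trans hFc
  simp only [hF] at hFx
  rw [hC] at hFx ⊢
  linarith


theorem stmt_5
    (p : ℝ) (hp : 1 < p)
    (cp : ℝ) (hcp : cp = if p ≤ 2 then p else 2 ^ p - 2) :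
    ∀ x y : ℝ, 0 < x → 0 < y →
      (x + y) * ((x + y) ^ p - x ^ p - y ^ p) ≤ cp * (x ^ p * y + x * y ^ p) := by
  intro x y hx hy
  rcases le_or_gt p 2 with hp2 | hp2
  · rw [hcp, if_pos hp2]
    have h1 := chi_le hp hp2 hx hy
    have h2 := chi_le hp hp2 hy hx
    rw [show y + x = x + y from add_comm y x] at h2
    have e1 : x^(p-1) * x = x^p := by
      rw [← Real.rpow_add_one hx.ne', show p-1+1 = p by ring]
    have e2 : y^(p-1) * y = y^p := by
      rw [← Real.rpow_add_one hy.ne', show p-1+1 = p by ring]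
    have hx1 : x * ((x+y)^p - x^p - y^p) ≤ p * (x^p * y) := by
      calc x * ((x+y)^p - x^p - y^p) ≤ x * (p * x^(p-1) * y) :=
            mul_le_mul_of_nonneg_left h1 hx.le
        _ = p * (x^(p-1) * x) * y := by ring
        _ = p * (x^p * y) := by rw [e1]; ring
    have hy1 : y * ((x+y)^p - y^p - x^p) ≤ p * (x * y^p) := by
      calc y * ((x+y)^p - y^p - x^p) ≤ y * (p * y^(p-1) * x) :=
            mul_le_mul_of_nonneg_left h2 hy.le
        _ = p * (y^(p-1) * y) * x := by ring
        _ = p * (x * y^p) := by rw [e2]; ring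
    nlinarith [hx1, hy1]
  · rw [hcp, if_neg (not_le.2 hp2)]
    have convert_goal : ∀ u v : ℝ, 0 < u → 0 < v →
        (u+v)^(p+1) - u^(p+1) - v^(p+1) ≤ ((2:ℝ)^p - 1) * (u^p * v + u * v^p) →
        (u + v) * ((u + v) ^ p - u ^ p - v ^ p) ≤ ((2:ℝ)^p - 2) * (u ^ p * v + u * v ^ p) := by
      intro u v hu hv hF
      have e1 : (u+v)^(p+1) = (u+v)^p * (u+v) :=
        Real.rpow_add_one (by positivity) p
      have e2 : u^(p+1) = u^p * u := Real.rpow_add_one hu.ne' p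
      have e3 : v^(p+1) = v^p * v := Real.rpow_add_one hv.ne' p
      rw [e1, e2, e3] at hF
      nlinarith [hF]
    rcases le_total x y with hxy | hxy
    · exact convert_goal x y hx hy (key_gt2 hp2 hx hy hxy)
    · have h := convert_goal y x hy hx (key_gt2 hp2 hy hx hxy)
      rw [show y + x = x + y from add_comm y x] at h
      nlinarith [h]
end

section
/- Suppose b_{n,j} ≥ 0 with b_{n,j} = 0 for j ≤ n, and ∑_{n=1}^{j−1} n·b_{n,j} ≤ j for all j ≥ 2. Let r > 2 and w_n := r^n. Then for all j ≥ 2, ∑_{n=1}^{j−1} w_n b_{n,j} ≤ (2/r)·w_j, i.e., the weighted condition holds with κ = 2/r < 1. -/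
lemma nat_aux (n k : ℕ) (hn : 1 ≤ n) : n + k + 1 ≤ 2 * n * 2 ^ k := by
  have h := Nat.lt_two_pow_self (n := k)
  nlinarith [Nat.one_le_two_pow (n := k)]

theorem stmt_9
    (b : ℕ → ℕ → ℝ)
    (hb0 : ∀ n j, 0 ≤ b n j)
    (hbz : ∀ n j, j ≤ n → b n j = 0)
    (hmass : ∀ j : ℕ, 2 ≤ j → ∑ n ∈ Finset.Ico 1 j, (n : ℝ) * b n j ≤ (j : ℝ))
    (r : ℝ) (hr : 2 < r)
    (w : ℕ → ℝ) (hw : ∀ n, w n = r ^ n) :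
    ∀ j : ℕ, 2 ≤ j → ∑ n ∈ Finset.Ico 1 j, w n * b n j ≤ (2 / r) * w j := by
  intro j hj
  have hr0 : (0 : ℝ) < r := by linarith
  have hj0 : (0 : ℝ) < (j : ℝ) := by positivity
  have key : ∀ n ∈ Finset.Ico 1 j,
      w n * b n j ≤ (2 * r ^ (j - 1) / j) * ((n : ℝ) * b n j) := by
    intro n hn
    rw [Finset.mem_Ico] at hn
    obtain ⟨hn1, hnj⟩ := hn
    rw [hw]
    have hb := hb0 n j
    -- suffices : r ^ n ≤ 2 * r ^ (j-1) / j * n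
    have hnb : r ^ n ≤ 2 * r ^ (j - 1) / j * n := by
      rw [div_mul_eq_mul_div, le_div_iff₀ hj0]
      -- r ^ n * j ≤ 2 * r ^ (j-1) * n
      set k := j - 1 - n with hk
      have hjeq : j = n + k + 1 := by omega
      have hsplit : r ^ (j - 1) = r ^ n * r ^ k := by
        rw [← pow_add]; congr 1; omega
      have h2k : (2 : ℝ) ^ k ≤ r ^ k := pow_le_pow_left₀ (by norm_num) hr.le k
      have hnat : (n + k + 1 : ℝ) ≤ 2 * n * 2 ^ k := by
        have := nat_aux n k hn1
        calc (n + k + 1 : ℝ) = ((n + k + 1 : ℕ) : ℝ) := by push_cast; ring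
          _ ≤ ((2 * n * 2 ^ k : ℕ) : ℝ) := by exact_mod_cast this
          _ = 2 * n * 2 ^ k := by push_cast; ring
      have hpn : (0 : ℝ) < r ^ n := pow_pos hr0 n
      have hn0 : (0 : ℝ) < (n : ℝ) := by exact_mod_cast hn1
      rw [hsplit, hjeq]
      push_cast
      have h1 : (n : ℝ) + k + 1 ≤ 2 * n * r ^ k := by nlinarith
      nlinarith [mul_le_mul_of_nonneg_left h1 hpn.le]
    calc r ^ n * b n j ≤ (2 * r ^ (j - 1) / j * n) * b n j := by
          exact mul_le_mul_of_nonneg_right hnb hb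
      _ = 2 * r ^ (j - 1) / j * (n * b n j) := by ring
  have hsum := Finset.sum_le_sum key
  rw [← Finset.mul_sum] at hsum
  have hc : (0 : ℝ) ≤ 2 * r ^ (j - 1) / j := by positivity
  have h2 := mul_le_mul_of_nonneg_left (hmass j hj) hc
  have hfin : 2 * r ^ (j - 1) / j * (j : ℝ) = (2 / r) * w j := by
    rw [hw]
    have : r ^ j = r * r ^ (j - 1) := by
      rw [← pow_succ']
      congr 1; omega
    field_simp
    rw [this]; ring
  linarith
end

section
/- Let φ : (0,1) → [0,∞) be such that x ↦ xφ(x) is non-decreasing and integrable on (0,1), and assume ∫_0^{1/2} tφ(t) dt > 0. For j ≥ 2 define d_j := j / ∑_{m=1}^{j−1} m φ(m/j) and b_{n,j} := d_j φ(n/j) for 1 ≤ n < j. Then for every p > 1 and every j ≥ 2, (1/j^p) ∑_{n=1}^{j−1} n^p b_{n,j} ≤ (∫_0^1 t^p φ(t) dt)/(∫_0^{1/2} t φ(t) dt). In particular there exist p > 1 and κ < 1 such that ∑_{n=1}^{j−1} n^p b_{n,j} ≤ κ j^p for all j ≥ 2. -/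
open MeasureTheory Set Filter

lemma riem_upper (f : ℝ → ℝ) (hm : MonotoneOn f (Ioo 0 1))
    (h0 : ∀ x ∈ Ioo (0:ℝ) 1, 0 ≤ f x)
    (hi : IntegrableOn f (Ioo 0 1)) (j : ℕ) (hj : 2 ≤ j) :
    (∑ n ∈ Finset.Ico 1 j, f ((n:ℝ)/j)) * (1/(j:ℝ)) ≤ ∫ t in Ioo (0:ℝ) 1, f t := by
  have hj0 : (0:ℝ) < j := by exact_mod_cast Nat.lt_of_lt_of_le two_pos hj
  have hj2 : (2:ℝ) ≤ j := by exact_mod_cast hj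
  set a : ℕ → ℝ := fun i => ((1+i : ℕ) : ℝ) / j with ha
  have hle : ∀ i : ℕ, a i ≤ a (i+1) := by
    intro i
    show ((1+i : ℕ) : ℝ) / j ≤ ((1+(i+1) : ℕ) : ℝ) / j
    gcongr <;> first | exact le_of_lt hj0 | (push_cast; linarith) | omega
  have hsub : ∀ i : ℕ, i + 2 ≤ j → Ioo (a i) (a (i+1)) ⊆ Ioo (0:ℝ) 1 := by
    intro i hij
    apply Ioo_subset_Ioo
    · positivity
    · show ((1+(i+1) : ℕ) : ℝ) / j ≤ 1
      rw [div_le_one hj0]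
      have : ((i:ℝ)) + 2 ≤ j := by exact_mod_cast hij
      push_cast; linarith
  have hmem : ∀ i : ℕ, i + 2 ≤ j → a i ∈ Ioo (0:ℝ) 1 := by
    intro i hij
    refine ⟨by positivity, ?_⟩
    show ((1+i : ℕ) : ℝ) / j < 1
    rw [div_lt_one hj0]
    have : ((i:ℝ)) + 2 ≤ j := by exact_mod_cast hij
    push_cast; linarith
  have hint' : ∀ i : ℕ, i + 2 ≤ j → IntervalIntegrable f volume (a i) (a (i+1)) := by
    intro i hij
    rw [intervalIntegrable_iff_integrableOn_Ioc_of_le (hle i),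
      integrableOn_Ioc_iff_integrableOn_Ioo]
    exact hi.mono_set (hsub i hij)
  have step : ∀ i : ℕ, i + 2 ≤ j →
      f (a i) * (1/(j:ℝ)) ≤ ∫ t in (a i)..(a (i+1)), f t := by
    intro i hij
    rw [intervalIntegral.integral_of_le (hle i), integral_Ioc_eq_integral_Ioo]
    have hc : ∫ _ in Ioo (a i) (a (i+1)), f (a i) = (a (i+1) - a i) * f (a i) := by
      rw [setIntegral_const, Real.volume_real_Ioo_of_le (hle i)]
      simp [smul_eq_mul]
    have hdiff : a (i+1) - a i = 1/(j:ℝ) := by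
      show ((1+(i+1) : ℕ) : ℝ) / j - ((1+i : ℕ) : ℝ) / j = 1/(j:ℝ)
      push_cast; field_simp; ring
    calc f (a i) * (1/(j:ℝ)) = ∫ _ in Ioo (a i) (a (i+1)), f (a i) := by
          rw [hc, hdiff]; ring
      _ ≤ ∫ t in Ioo (a i) (a (i+1)), f t := by
          apply setIntegral_mono_on
          · exact integrableOn_const (by rw [Real.volume_Ioo]; exact ENNReal.ofReal_ne_top)
          · exact hi.mono_set (hsub i hij)
          · exact measurableSet_Ioo
          · intro t ht
            exact hm (hmem i hij) (hsub i hij ht) (le_of_lt ht.1)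
  -- sum up
  have hsum : ∑ i ∈ Finset.range (j-1), ∫ t in (a i)..(a (i+1)), f t
      = ∫ t in (a 0)..(a (j-1)), f t := by
    apply intervalIntegral.sum_integral_adjacent_intervals
    intro i hij
    exact hint' i (by omega)
  have ha0 : a 0 = 1/(j:ℝ) := by show ((1+0:ℕ):ℝ)/j = 1/(j:ℝ); norm_num
  have haj : a (j-1) = 1 := by
    show ((1+(j-1):ℕ):ℝ)/j = 1
    rw [div_eq_one_iff_eq (ne_of_gt hj0)]
    congr 1
    omega
  have hsum2 : (∑ n ∈ Finset.Ico 1 j, f ((n:ℝ)/j)) * (1/(j:ℝ))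
      = ∑ i ∈ Finset.range (j-1), f (a i) * (1/(j:ℝ)) := by
    rw [Finset.sum_mul, Finset.sum_Ico_eq_sum_range]
  rw [hsum2]
  calc ∑ i ∈ Finset.range (j-1), f (a i) * (1/(j:ℝ))
      ≤ ∑ i ∈ Finset.range (j-1), ∫ t in (a i)..(a (i+1)), f t := by
        apply Finset.sum_le_sum
        intro i hi'
        exact step i (by simp at hi'; omega)
    _ = ∫ t in (a 0)..(a (j-1)), f t := hsum
    _ = ∫ t in Ioo (a 0) 1, f t := by
        rw [haj, intervalIntegral.integral_of_le (by rw [ha0]; rw [div_le_one hj0]; linarith),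
          integral_Ioc_eq_integral_Ioo]
    _ ≤ ∫ t in Ioo (0:ℝ) 1, f t := by
        apply setIntegral_mono_set hi
        · filter_upwards [ae_restrict_mem measurableSet_Ioo] with x hx using h0 x hx
        · apply HasSubset.Subset.eventuallyLE
          apply Ioo_subset_Ioo _ le_rfl
          rw [ha0]; positivity

lemma riem_lower (f : ℝ → ℝ) (hm : MonotoneOn f (Ioo 0 1))
    (h0 : ∀ x ∈ Ioo (0:ℝ) 1, 0 ≤ f x)
    (hi : IntegrableOn f (Ioo 0 1)) (j : ℕ) (hj : 2 ≤ j) :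
    (∫ t in Ioo (0:ℝ) (1/2), f t) ≤ (∑ n ∈ Finset.Ico 1 j, f ((n:ℝ)/j)) * (1/(j:ℝ)) := by
  have hj0 : (0:ℝ) < j := by exact_mod_cast Nat.lt_of_lt_of_le two_pos hj
  have hj2 : (2:ℝ) ≤ j := by exact_mod_cast hj
  set a : ℕ → ℝ := fun i => (i : ℝ) / j with ha
  have hle : ∀ i : ℕ, a i ≤ a (i+1) := by
    intro i
    show (i : ℝ) / j ≤ ((i+1 : ℕ) : ℝ) / j
    gcongr <;> first | exact le_of_lt hj0 | (push_cast; linarith)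
  have hsub : ∀ i : ℕ, i + 2 ≤ j → Ioo (a i) (a (i+1)) ⊆ Ioo (0:ℝ) 1 := by
    intro i hij
    apply Ioo_subset_Ioo
    · positivity
    · show ((i+1 : ℕ) : ℝ) / j ≤ 1
      rw [div_le_one hj0]
      have : ((i:ℝ)) + 2 ≤ j := by exact_mod_cast hij
      push_cast; linarith
  have hmem : ∀ i : ℕ, i + 2 ≤ j → a (i+1) ∈ Ioo (0:ℝ) 1 := by
    intro i hij
    constructor
    · show (0:ℝ) < ((i+1 : ℕ) : ℝ) / j
      positivity
    · show ((i+1 : ℕ) : ℝ) / j < 1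
      rw [div_lt_one hj0]
      have : ((i:ℝ)) + 2 ≤ j := by exact_mod_cast hij
      push_cast; linarith
  have hint' : ∀ i : ℕ, i + 2 ≤ j → IntervalIntegrable f volume (a i) (a (i+1)) := by
    intro i hij
    rw [intervalIntegrable_iff_integrableOn_Ioc_of_le (hle i),
      integrableOn_Ioc_iff_integrableOn_Ioo]
    exact hi.mono_set (hsub i hij)
  have step : ∀ i : ℕ, i + 2 ≤ j →
      (∫ t in (a i)..(a (i+1)), f t) ≤ f (a (i+1)) * (1/(j:ℝ)) := by
    intro i hij
    rw [intervalIntegral.integral_of_le (hle i), integral_Ioc_eq_integral_Ioo]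
    have hc : ∫ _ in Ioo (a i) (a (i+1)), f (a (i+1)) = (a (i+1) - a i) * f (a (i+1)) := by
      rw [setIntegral_const, Real.volume_real_Ioo_of_le (hle i)]
      simp [smul_eq_mul]
    have hdiff : a (i+1) - a i = 1/(j:ℝ) := by
      show ((i+1 : ℕ) : ℝ) / j - (i:ℝ) / j = 1/(j:ℝ)
      push_cast; field_simp; ring
    calc (∫ t in Ioo (a i) (a (i+1)), f t)
        ≤ ∫ _ in Ioo (a i) (a (i+1)), f (a (i+1)) := by
          apply setIntegral_mono_on
          · exact hi.mono_set (hsub i hij)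
          · exact integrableOn_const (by rw [Real.volume_Ioo]; exact ENNReal.ofReal_ne_top)
          · exact measurableSet_Ioo
          · intro t ht
            exact hm (hsub i hij ht) (hmem i hij) (le_of_lt ht.2)
      _ = f (a (i+1)) * (1/(j:ℝ)) := by rw [hc, hdiff]; ring
  have hsum : ∑ i ∈ Finset.range (j-1), ∫ t in (a i)..(a (i+1)), f t
      = ∫ t in (a 0)..(a (j-1)), f t := by
    apply intervalIntegral.sum_integral_adjacent_intervals
    intro i hij
    exact hint' i (by omega)
  have ha0 : a 0 = 0 := by show ((0:ℕ):ℝ)/j = 0; norm_num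
  have hajm : (1:ℝ)/2 ≤ a (j-1) := by
    show (1:ℝ)/2 ≤ ((j-1:ℕ):ℝ)/j
    rw [le_div_iff₀ hj0, Nat.cast_sub (by omega)]
    push_cast; linarith
  have hajm1 : a (j-1) ≤ 1 := by
    show ((j-1:ℕ):ℝ)/j ≤ 1
    rw [div_le_one hj0, Nat.cast_sub (by omega)]
    push_cast; linarith
  calc (∫ t in Ioo (0:ℝ) (1/2), f t)
      ≤ ∫ t in Ioo (0:ℝ) (a (j-1)), f t := by
        apply setIntegral_mono_set (hi.mono_set (Ioo_subset_Ioo le_rfl hajm1))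
        · filter_upwards [ae_restrict_mem measurableSet_Ioo] with x hx using
            h0 x (Ioo_subset_Ioo le_rfl hajm1 hx)
        · exact (Ioo_subset_Ioo le_rfl hajm).eventuallyLE
    _ = ∫ t in (a 0)..(a (j-1)), f t := by
        rw [intervalIntegral.integral_of_le (by rw [ha0]; linarith),
          integral_Ioc_eq_integral_Ioo, ha0]
    _ = ∑ i ∈ Finset.range (j-1), ∫ t in (a i)..(a (i+1)), f t := hsum.symm
    _ ≤ ∑ i ∈ Finset.range (j-1), f (a (i+1)) * (1/(j:ℝ)) := by
        apply Finset.sum_le_sum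
        intro i hi'
        exact step i (by simp at hi'; omega)
    _ = (∑ n ∈ Finset.Ico 1 j, f ((n:ℝ)/j)) * (1/(j:ℝ)) := by
        rw [Finset.sum_mul, Finset.sum_Ico_eq_sum_range]
        apply Finset.sum_congr rfl
        intro i _
        show f (((i+1:ℕ):ℝ)/j) * (1/(j:ℝ)) = f (((1+i:ℕ):ℝ)/j) * (1/(j:ℝ))
        congr 3
        push_cast; ring

lemma g_split (φ : ℝ → ℝ) (p : ℝ) {z : ℝ} (hz : 0 < z) :
    z ^ p * φ z = z ^ (p-1) * (z * φ z) := by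
  rw [Real.rpow_sub hz, Real.rpow_one]
  field_simp

lemma g_mono (φ : ℝ → ℝ) (hφ0 : ∀ x ∈ Set.Ioo (0:ℝ) 1, 0 ≤ φ x)
    (hmono : MonotoneOn (fun x => x * φ x) (Set.Ioo (0:ℝ) 1))
    (p : ℝ) (hp : 1 ≤ p) :
    MonotoneOn (fun x => x ^ p * φ x) (Set.Ioo (0:ℝ) 1) := by
  intro x hx y hy hxy
  show x ^ p * φ x ≤ y ^ p * φ y
  rw [g_split φ p hx.1, g_split φ p hy.1]
  apply mul_le_mul
  · exact Real.rpow_le_rpow (le_of_lt hx.1) hxy (by linarith)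
  · exact hmono hx hy hxy
  · exact mul_nonneg (le_of_lt hx.1) (hφ0 x hx)
  · exact Real.rpow_nonneg (le_of_lt hy.1) _

lemma g_le (φ : ℝ → ℝ) (hφ0 : ∀ x ∈ Set.Ioo (0:ℝ) 1, 0 ≤ φ x)
    (p : ℝ) (hp : 1 ≤ p) {x : ℝ} (hx : x ∈ Set.Ioo (0:ℝ) 1) :
    0 ≤ x ^ p * φ x ∧ x ^ p * φ x ≤ x * φ x := by
  have h1 : (0:ℝ) ≤ φ x := hφ0 x hx
  constructor
  · exact mul_nonneg (Real.rpow_nonneg (le_of_lt hx.1) _) h1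
  · apply mul_le_mul_of_nonneg_right ?_ h1
    calc x ^ p ≤ x ^ (1:ℝ) := Real.rpow_le_rpow_of_exponent_ge hx.1 (le_of_lt hx.2) hp
      _ = x := Real.rpow_one x

lemma g_int (φ : ℝ → ℝ) (hφ0 : ∀ x ∈ Set.Ioo (0:ℝ) 1, 0 ≤ φ x)
    (hint : IntegrableOn (fun x => x * φ x) (Set.Ioo (0:ℝ) 1))
    (p : ℝ) (hp : 1 ≤ p) :
    IntegrableOn (fun x => x ^ p * φ x) (Set.Ioo (0:ℝ) 1) := by
  have haesm : AEStronglyMeasurable (fun x => x ^ p * φ x)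
      (volume.restrict (Set.Ioo (0:ℝ) 1)) := by
    have h1 : AEStronglyMeasurable (fun x : ℝ => x ^ (p-1) * (x * φ x))
        (volume.restrict (Set.Ioo (0:ℝ) 1)) :=
      ((measurable_id.pow_const (p-1)).aestronglyMeasurable).mul hint.aestronglyMeasurable
    apply h1.congr
    filter_upwards [ae_restrict_mem measurableSet_Ioo] with x hx
    exact (g_split φ p hx.1).symm
  apply MeasureTheory.Integrable.mono hint haesm
  filter_upwards [ae_restrict_mem measurableSet_Ioo] with x hx
  obtain ⟨h0, h1⟩ := g_le φ hφ0 p hp hx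
  rw [Real.norm_eq_abs, Real.norm_eq_abs, abs_of_nonneg h0]
  exact h1.trans (le_abs_self _)

theorem stmt_10
    (φ : ℝ → ℝ)
    (hφ0 : ∀ x ∈ Set.Ioo (0:ℝ) 1, 0 ≤ φ x)
    (hmono : MonotoneOn (fun x => x * φ x) (Set.Ioo (0:ℝ) 1))
    (hint : IntegrableOn (fun x => x * φ x) (Set.Ioo (0:ℝ) 1))
    (hpos : 0 < ∫ t in Set.Ioo (0:ℝ) (1/2), t * φ t)
    (d : ℕ → ℝ)
    (hd : ∀ j : ℕ, 2 ≤ j → d j = (j : ℝ) / ∑ m ∈ Finset.Ico 1 j, (m : ℝ) * φ ((m : ℝ) / (j : ℝ)))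
    (b : ℕ → ℕ → ℝ)
    (hb : ∀ n j : ℕ, 1 ≤ n → n < j → b n j = d j * φ ((n : ℝ) / (j : ℝ))) :
    (∀ p : ℝ, 1 < p → ∀ j : ℕ, 2 ≤ j →
      (1 / (j : ℝ) ^ p) * ∑ n ∈ Finset.Ico 1 j, (n : ℝ) ^ p * b n j
        ≤ (∫ t in Set.Ioo (0:ℝ) 1, t ^ p * φ t) / ∫ t in Set.Ioo (0:ℝ) (1/2), t * φ t) ∧
    (∃ p : ℝ, 1 < p ∧ ∃ κ : ℝ, κ < 1 ∧ ∀ j : ℕ, 2 ≤ j →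
      ∑ n ∈ Finset.Ico 1 j, (n : ℝ) ^ p * b n j ≤ κ * (j : ℝ) ^ p) := by
  have hf0 : ∀ x ∈ Set.Ioo (0:ℝ) 1, 0 ≤ x * φ x := fun x hx =>
    mul_nonneg (le_of_lt hx.1) (hφ0 x hx)
  have part1 : ∀ p : ℝ, 1 < p → ∀ j : ℕ, 2 ≤ j →
      (1 / (j : ℝ) ^ p) * ∑ n ∈ Finset.Ico 1 j, (n : ℝ) ^ p * b n j
        ≤ (∫ t in Set.Ioo (0:ℝ) 1, t ^ p * φ t) / ∫ t in Set.Ioo (0:ℝ) (1/2), t * φ t := by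
    intro p hp j hj
    have hp1 : 1 ≤ p := le_of_lt hp
    have hj0 : (0:ℝ) < j := by
      have : (2:ℝ) ≤ j := by exact_mod_cast hj
      linarith
    have hjne : (j:ℝ) ≠ 0 := ne_of_gt hj0
    have hjp : (0:ℝ) < (j:ℝ) ^ p := Real.rpow_pos_of_pos hj0 p
    set A := ∑ n ∈ Finset.Ico 1 j, (((n:ℝ)/j) ^ p * φ ((n:ℝ)/j)) with hAdef
    set B := ∑ n ∈ Finset.Ico 1 j, (((n:ℝ)/j) * φ ((n:ℝ)/j)) with hBdef
    have h2 : A * (1/(j:ℝ)) ≤ ∫ t in Set.Ioo (0:ℝ) 1, t ^ p * φ t :=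
      riem_upper (fun x => x ^ p * φ x) (g_mono φ hφ0 hmono p hp1)
        (fun x hx => (g_le φ hφ0 p hp1 hx).1) (g_int φ hφ0 hint p hp1) j hj
    have h3 : (∫ t in Set.Ioo (0:ℝ) (1/2), t * φ t) ≤ B * (1/(j:ℝ)) :=
      riem_lower (fun x => x * φ x) hmono hf0 hint j hj
    have hmemIoo : ∀ n ∈ Finset.Ico 1 j, ((n:ℝ)/j) ∈ Set.Ioo (0:ℝ) 1 := by
      intro n hn
      rw [Finset.mem_Ico] at hn
      constructor
      · apply div_pos _ hj0
        exact_mod_cast Nat.lt_of_lt_of_le Nat.zero_lt_one hn.1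
      · rw [div_lt_one hj0]
        exact_mod_cast hn.2
    have hA0 : 0 ≤ A := Finset.sum_nonneg fun n hn => (g_le φ hφ0 p hp1 (hmemIoo n hn)).1
    have hB0 : 0 < B := by
      have h4 : 0 < B * (1/(j:ℝ)) := lt_of_lt_of_le hpos h3
      rcases mul_pos_iff.mp h4 with ⟨hB,_⟩|⟨_,hneg⟩
      · exact hB
      · exfalso
        have : 0 < 1/(j:ℝ) := by positivity
        linarith
    have hBne : B ≠ 0 := ne_of_gt hB0
    have hD : ∑ m ∈ Finset.Ico 1 j, (m : ℝ) * φ ((m : ℝ) / (j : ℝ)) = j * B := by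
      rw [hBdef, Finset.mul_sum]
      apply Finset.sum_congr rfl
      intro m _
      field_simp
    have hsum : ∑ n ∈ Finset.Ico 1 j, (n : ℝ) ^ p * b n j = (j:ℝ) ^ p * ((1/B) * A) := by
      rw [hAdef, Finset.mul_sum, Finset.mul_sum]
      apply Finset.sum_congr rfl
      intro n hn
      rw [Finset.mem_Ico] at hn
      rw [hb n j hn.1 hn.2, hd j hj, hD,
        Real.div_rpow (Nat.cast_nonneg n) (le_of_lt hj0)]
      field_simp
    have hIg0 : 0 ≤ ∫ t in Set.Ioo (0:ℝ) 1, t ^ p * φ t :=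
      le_trans (by positivity) h2
    have key : A / B ≤ (∫ t in Set.Ioo (0:ℝ) 1, t ^ p * φ t) /
        ∫ t in Set.Ioo (0:ℝ) (1/2), t * φ t := by
      rw [show A / B = (A * (1/(j:ℝ))) / (B * (1/(j:ℝ))) from
        (mul_div_mul_right A B (by positivity)).symm]
      exact div_le_div₀ hIg0 h2 hpos h3
    calc (1 / (j : ℝ) ^ p) * ∑ n ∈ Finset.Ico 1 j, (n : ℝ) ^ p * b n j
        = A / B := by rw [hsum]; field_simp
      _ ≤ _ := key
  refine ⟨part1, ?_⟩
  have hlim : Filter.Tendsto (fun k : ℕ => ∫ t in Set.Ioo (0:ℝ) 1, t ^ ((k:ℝ)+2) * φ t)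
      Filter.atTop (nhds 0) := by
    have h := MeasureTheory.tendsto_integral_of_dominated_convergence
      (μ := volume.restrict (Set.Ioo (0:ℝ) 1))
      (F := fun (k : ℕ) (t : ℝ) => t ^ ((k:ℝ)+2) * φ t) (f := fun _ => (0:ℝ))
      (bound := fun t => t * φ t)
      (fun k => (g_int φ hφ0 hint ((k:ℝ)+2) (by
        have : (0:ℝ) ≤ k := Nat.cast_nonneg k
        linarith)).aestronglyMeasurable)
      hint
      (fun k => by
        filter_upwards [ae_restrict_mem measurableSet_Ioo] with x hx
        obtain ⟨h0', h1'⟩ := g_le φ hφ0 ((k:ℝ)+2) (by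
          have : (0:ℝ) ≤ k := Nat.cast_nonneg k
          linarith) hx
        rw [Real.norm_eq_abs, abs_of_nonneg h0']
        exact h1')
      (by
        filter_upwards [ae_restrict_mem measurableSet_Ioo] with x hx
        have hrw : (fun k : ℕ => x ^ ((k:ℝ)+2) * φ x) = fun k : ℕ => x ^ (k+2) * φ x := by
          funext k
          congr 1
          rw [show ((k:ℝ)+2) = ((k+2 : ℕ) : ℝ) by push_cast; ring, Real.rpow_natCast]
        rw [hrw]
        have hx1 : |x| < 1 := by rw [abs_of_pos hx.1]; exact hx.2
        have ht := ((tendsto_pow_atTop_nhds_zero_of_abs_lt_one hx1).comp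
          (Filter.tendsto_add_atTop_nat 2)).mul_const (φ x)
        simpa using ht)
    simpa using h
  have hev : ∀ᶠ (k : ℕ) in Filter.atTop,
      (∫ t in Set.Ioo (0:ℝ) 1, t ^ ((k:ℝ)+2) * φ t) < ∫ t in Set.Ioo (0:ℝ) (1/2), t * φ t :=
    hlim.eventually (gt_mem_nhds hpos)
  obtain ⟨k, hk⟩ := hev.exists
  have hp' : (1:ℝ) < (k:ℝ)+2 := by
    have : (0:ℝ) ≤ k := Nat.cast_nonneg k
    linarith
  refine ⟨(k:ℝ)+2, hp',
    (∫ t in Set.Ioo (0:ℝ) 1, t ^ ((k:ℝ)+2) * φ t) / ∫ t in Set.Ioo (0:ℝ) (1/2), t * φ t,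
    (div_lt_one hpos).2 hk, ?_⟩
  intro j hj
  have h := part1 ((k:ℝ)+2) hp' j hj
  have hj0 : (0:ℝ) < j := by
    have : (2:ℝ) ≤ j := by exact_mod_cast hj
    linarith
  have hjp : (0:ℝ) < (j:ℝ) ^ ((k:ℝ)+2) := Real.rpow_pos_of_pos hj0 _
  rw [one_div, inv_mul_eq_div, div_le_iff₀ hjp] at h
  exact h
end

section
/- Let G₀ and G₁ be generators of substochastic C₀-semigroups on a Banach lattice X with D(G₀) ⊆ D(G₁), and suppose G₀ + G₁ (with domain D(G₀)) generates a C₀-semigroup (S(t))_{t≥0}. Then (S(t))_{t≥0} is substochastic, i.e., S(t) is positive and ‖S(t)‖ ≤ 1 for all t ≥ 0. -/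
open Filter Set Topology MeasureTheory intervalIntegral


/-- Dini-type lemma: continuous function with right upper slopes < r for all r>0 decreases. -/
lemma aux_dini {f : ℝ → ℝ} {b : ℝ} (hb : 0 ≤ b) (hf : ContinuousOn f (Set.Icc 0 b))
    (H : ∀ x ∈ Set.Ico (0:ℝ) b, ∀ r : ℝ, 0 < r →
      ∀ᶠ h in nhdsWithin (0:ℝ) (Set.Ioi 0), (f (x + h) - f x) / h < r) :
    f b ≤ f 0 := by
  have := image_le_of_liminf_slope_right_le_deriv_boundary (B := fun _ => f 0)
    (B' := fun _ => 0) hf le_rfl continuousOn_const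
    (fun x _ => hasDerivWithinAt_const x _ (f 0)) ?_ (right_mem_Icc.2 hb)
  · exact this
  · intro x hx r hr
    have hmap : Filter.Tendsto (fun z : ℝ => z - x) (nhdsWithin x (Set.Ioi x))
        (nhdsWithin 0 (Set.Ioi 0)) := by
      apply tendsto_nhdsWithin_of_tendsto_nhds_of_eventually_within
      · have : Filter.Tendsto (fun z : ℝ => z - x) (nhds x) (nhds (x - x)) :=
          (continuous_id.sub continuous_const).tendsto x
        simpa using this.mono_left nhdsWithin_le_nhds
      · filter_upwards [eventually_mem_nhdsWithin] with z hz
        simpa [Set.mem_Ioi, sub_pos] using hz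
    have := hmap.eventually (H x hx r hr)
    apply Filter.Eventually.frequently
    filter_upwards [this, eventually_mem_nhdsWithin] with z hz hz'
    have hzx : z - x ≠ 0 := by
      have : x < z := hz'
      linarith
    simpa [slope_def_field, sub_add_cancel, div_eq_iff, sub_ne_zero] using
      (by simpa [sub_add_cancel] using hz : (f (x + (z - x)) - f x) / (z - x) < r)

section Lat
variable {X : Type*} [NormedAddCommGroup X] [Lattice X] [HasSolidNorm X] [IsOrderedAddMonoid X]

/-- In a lattice ordered group, if a is disjoint from b and c (all nonneg), it is disjoint
from b + c. -/
lemma aux_inf_add {a b c : X} (ha : 0 ≤ a) (hb : 0 ≤ b) (hc : 0 ≤ c)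
    (hab : a ⊓ b = 0) (hac : a ⊓ c = 0) : a ⊓ (b + c) = 0 := by
  have h1 : a ⊓ (b + c) - b ≤ a ⊓ c := by
    apply le_inf
    · calc a ⊓ (b + c) - b ≤ a - b := by gcongr; exact inf_le_left
        _ ≤ a - 0 := by gcongr
        _ = a := sub_zero a
    · calc a ⊓ (b + c) - b ≤ (b + c) - b := by gcongr; exact inf_le_right
        _ = c := by abel
  rw [hac, sub_nonpos] at h1
  have h2 : a ⊓ (b + c) ≤ a ⊓ b := le_inf inf_le_left h1
  rw [hab] at h2
  exact le_antisymm h2 (le_inf ha (by positivity))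

lemma aux_nsmul_cancel {y : X} (n : ℕ) (h : 0 ≤ (n + 1) • y) : 0 ≤ y := by
  -- show y⁻ = 0
  have hd : ∀ m : ℕ, y⁻ ⊓ (m • y⁺) = 0 := by
    intro m
    induction m with
    | zero => simpa using inf_eq_right.2 (negPart_nonneg y)
    | succ k ih =>
      have : y⁻ ⊓ (k • y⁺ + y⁺) = 0 :=
        aux_inf_add (negPart_nonneg y) (nsmul_nonneg (posPart_nonneg y) k)
          (posPart_nonneg y) ih (by rw [inf_comm]; exact posPart_inf_negPart_eq_zero y)
      simpa [succ_nsmul] using this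
  have hy : (n+1) • y = (n+1) • y⁺ - (n+1) • y⁻ := by
    rw [← smul_sub, posPart_sub_negPart]
  have hle : (n+1) • y⁻ ≤ (n+1) • y⁺ := by
    rw [hy, sub_nonneg] at h; exact h
  have hyn : y⁻ ≤ (n+1) • y⁻ := by
    rw [succ_nsmul]
    exact le_add_of_nonneg_left (nsmul_nonneg (negPart_nonneg y) n)
  have : y⁻ ≤ y⁻ ⊓ ((n+1) • y⁺) := le_inf le_rfl (hyn.trans hle)
  rw [hd (n+1)] at this
  have : y⁻ = 0 := le_antisymm this (negPart_nonneg y)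
  exact negPart_eq_zero.1 this

variable [NormedSpace ℝ X]

lemma aux_smul_nonneg {c : ℝ} (hc : 0 ≤ c) {x : X} (hx : 0 ≤ x) : 0 ≤ c • x := by
  -- rational case
  have hq : ∀ q : ℚ, 0 ≤ q → 0 ≤ (q : ℝ) • x := by
    intro q hq0
    have hden : ((q.den : ℝ)) • ((q : ℝ) • x) = ((q.num.toNat : ℝ)) • x := by
      rw [smul_smul]
      congr 1
      have hqn : ((q.num.toNat : ℤ)) = q.num := Int.toNat_of_nonneg (Rat.num_nonneg.2 hq0)
      have h2 : ((q.den : ℚ)) * q = (q.num : ℚ) := by rw [mul_comm]; exact_mod_cast Rat.mul_den_eq_num q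
      have h3 : ((q.den : ℝ)) * (q : ℝ) = ((q.num : ℤ) : ℝ) := by exact_mod_cast congrArg (fun r : ℚ => (r : ℝ)) h2
      rw [h3]
      exact_mod_cast hqn.symm
    have hnum : 0 ≤ ((q.num.toNat : ℝ)) • x := by
      rw [Nat.cast_smul_eq_nsmul]; exact nsmul_nonneg hx _
    have := hden ▸ hnum
    rw [Nat.cast_smul_eq_nsmul] at this
    obtain ⟨m, hm⟩ : ∃ m : ℕ, q.den = m + 1 := ⟨q.den - 1, (Nat.succ_pred_eq_of_pos q.pos).symm⟩
    exact aux_nsmul_cancel m (by rwa [hm] at this)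
  -- real case by approximation with rationals from above
  have hseq : ∀ n : ℕ, ∃ q : ℚ, c < q ∧ (q : ℝ) < c + 1/(n+1) := by
    intro n
    exact exists_rat_btwn (lt_add_of_pos_right c (by positivity))
  choose q hq1 hq2 using hseq
  have hql : Filter.Tendsto (fun n : ℕ => ((q n : ℝ))) Filter.atTop (nhds c) := by
    have h1 : Filter.Tendsto (fun n : ℕ => c + 1/((n:ℝ)+1)) Filter.atTop (nhds (c + 0)) :=
      tendsto_const_nhds.add tendsto_one_div_add_atTop_nhds_zero_nat
    rw [add_zero] at h1
    exact tendsto_of_tendsto_of_tendsto_of_le_of_le tendsto_const_nhds h1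
      (fun n => (hq1 n).le) (fun n => (hq2 n).le)
  have hsm : Filter.Tendsto (fun n : ℕ => ((q n : ℝ)) • x) Filter.atTop (nhds (c • x)) :=
    (hql.smul tendsto_const_nhds)
  refine isClosed_Ici.mem_of_tendsto hsm ?_
  filter_upwards with n
  exact hq ((q n)) (by exact_mod_cast (hc.trans (hq1 n).le))

/-- negPart contraction for positive contractions. -/
lemma aux_negPart_bound (T : X →L[ℝ] X) (hpos : ∀ z : X, 0 ≤ z → 0 ≤ T z)
    (hcontr : ∀ z : X, ‖T z‖ ≤ ‖z‖) (y : X) : ‖(T y)⁻‖ ≤ ‖y⁻‖ := by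
  have h1 : (T y)⁻ ≤ T y⁻ := by
    have hTy : T y = T y⁺ - T y⁻ := by rw [← map_sub, posPart_sub_negPart]
    have : -(T y) ≤ T y⁻ := by
      rw [hTy, neg_sub]
      exact sub_le_self _ (hpos _ (posPart_nonneg y))
    rw [negPart_def]
    exact sup_le this (hpos _ (negPart_nonneg y))
  have h2 : ‖(T y)⁻‖ ≤ ‖T y⁻‖ := by
    apply HasSolidNorm.solid
    rw [abs_of_nonneg (negPart_nonneg _), abs_of_nonneg (hpos _ (negPart_nonneg y))]
    exact h1
  exact h2.trans (hcontr _)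

end Lat

lemma aux_ftc {X : Type*} [NormedAddCommGroup X] [NormedSpace ℝ X] [CompleteSpace X]
    {f : ℝ → X} (hf : ContinuousOn f (Set.Ici 0)) {a : ℝ} (ha : 0 ≤ a) :
    Filter.Tendsto (fun t : ℝ => t⁻¹ • ∫ s in a..(a+t), f s)
      (nhdsWithin 0 (Set.Ioi 0)) (nhds (f a)) := by
  rw [Metric.tendsto_nhdsWithin_nhds]
  intro ε hε
  have hca : ContinuousWithinAt f (Set.Ici 0) a := hf a ha
  rw [Metric.continuousWithinAt_iff] at hca
  obtain ⟨δ, hδ, hδ'⟩ := hca (ε/2) (by positivity)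
  refine ⟨δ, hδ, ?_⟩
  intro t ht hdist
  have ht0 : 0 < t := ht
  have htδ : t < δ := by
    rwa [Real.dist_eq, sub_zero, abs_of_pos ht0] at hdist
  have hsub : Set.uIcc a (a+t) ⊆ Set.Ici 0 := by
    rw [Set.uIcc_of_le (by linarith)]
    exact fun s hs => le_trans ha hs.1
  have hint : IntervalIntegrable f MeasureTheory.volume a (a+t) :=
    (hf.mono hsub).intervalIntegrable
  have hintc : IntervalIntegrable (fun _ : ℝ => f a) MeasureTheory.volume a (a+t) :=
    intervalIntegrable_const
  have hkey : (∫ s in a..(a+t), (f s - f a)) = (∫ s in a..(a+t), f s) - t • f a := by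
    rw [intervalIntegral.integral_sub hint hintc, intervalIntegral.integral_const]
    congr 1
    simp
  have hbound : ‖∫ s in a..(a+t), (f s - f a)‖ ≤ (ε/2) * |a + t - a| := by
    apply intervalIntegral.norm_integral_le_of_norm_le_const
    intro x hx
    rw [Set.uIoc_of_le (by linarith)] at hx
    have hx0 : (0:ℝ) ≤ x := le_trans ha hx.1.le
    have : dist x a < δ := by
      rw [Real.dist_eq, abs_of_pos (by linarith [hx.1] : (0:ℝ) < x - a)]
      linarith [hx.2]
    rw [← dist_eq_norm]
    exact (hδ' hx0 this).le
  rw [dist_eq_norm]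
  have heq : t⁻¹ • (∫ s in a..(a+t), f s) - f a
      = t⁻¹ • (∫ s in a..(a+t), (f s - f a)) := by
    rw [hkey, smul_sub, smul_smul, inv_mul_cancel₀ ht0.ne', one_smul]
  rw [heq, norm_smul, norm_inv, Real.norm_eq_abs, abs_of_pos ht0]
  calc t⁻¹ * ‖∫ s in a..(a+t), (f s - f a)‖ ≤ t⁻¹ * ((ε/2) * |a + t - a|) := by
        apply mul_le_mul_of_nonneg_left hbound (by positivity)
    _ = ε/2 := by
        rw [show a + t - a = t by ring, abs_of_pos ht0]
        field_simp
    _ < ε := by linarith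

lemma aux_integral_nonneg' {X : Type*} [NormedAddCommGroup X] [Lattice X] [HasSolidNorm X] [IsOrderedAddMonoid X] [NormedSpace ℝ X]
    [CompleteSpace X]
    (hsm : ∀ (c : ℝ), 0 ≤ c → ∀ (x : X), 0 ≤ x → 0 ≤ c • x)
    {f : ℝ → X} {a b : ℝ} (hab : a ≤ b)
    (hf : IntervalIntegrable f MeasureTheory.volume a b)
    (h : ∀ s ∈ Set.Ioc a b, 0 ≤ f s) : 0 ≤ ∫ s in a..b, f s := by
  rcases eq_or_lt_of_le hab with rfl|hab'
  · simp
  have hconv : Convex ℝ {y : X | 0 ≤ y} := by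
    intro y₁ h₁ y₂ h₂ p q hp hq hpq
    exact add_nonneg (hsm p hp y₁ h₁) (hsm q hq y₂ h₂)
  have hclosed : IsClosed {y : X | 0 ≤ y} := by
    have : {y : X | 0 ≤ y} = Set.Ici (0:X) := rfl
    rw [this]; exact isClosed_Ici
  have h0 : MeasureTheory.volume (Set.Ioc a b) ≠ 0 := by
    rw [Real.volume_Ioc]
    simp only [ne_eq, ENNReal.ofReal_eq_zero, not_le]
    linarith
  have hT : MeasureTheory.volume (Set.Ioc a b) ≠ ⊤ := by
    rw [Real.volume_Ioc]; exact ENNReal.ofReal_ne_top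
  have havg : (⨍ s in Set.Ioc a b, f s) ∈ {y : X | 0 ≤ y} := by
    apply hconv.set_average_mem hclosed h0 hT
    · filter_upwards [MeasureTheory.ae_restrict_mem measurableSet_Ioc] with s hs
      exact h s hs
    · exact hf.1
  have : (∫ s in Set.Ioc a b, f s) =
      (MeasureTheory.volume (Set.Ioc a b)).toReal • (⨍ s in Set.Ioc a b, f s) := by
    rw [MeasureTheory.setAverage_eq, smul_smul, MeasureTheory.measureReal_def, mul_inv_cancel₀, one_smul]
    simp only [ne_eq, ENNReal.toReal_eq_zero_iff]
    push_neg
    exact ⟨h0, hT⟩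
  rw [intervalIntegral.integral_of_le hab, this]
  exact hsm _ ENNReal.toReal_nonneg _ havg
theorem stmt_15
    {X : Type*}
    [NormedAddCommGroup X] [Lattice X] [HasSolidNorm X] [IsOrderedAddMonoid X] [NormedSpace ℝ X] [CompleteSpace X]
    -- the substochastic semigroups S₀ and S₁
    (S₀ S₁ : ℝ → X →L[ℝ] X)
    (hS₀0 : S₀ 0 = ContinuousLinearMap.id ℝ X)
    (hS₀add : ∀ s t : ℝ, 0 ≤ s → 0 ≤ t → S₀ (s + t) = (S₀ s).comp (S₀ t))
    (hS₀cont : ∀ x : X, ContinuousOn (fun t => S₀ t x) (Set.Ici 0))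
    (hS₀pos : ∀ t : ℝ, 0 ≤ t → ∀ x : X, 0 ≤ x → 0 ≤ S₀ t x)
    (hS₀contr : ∀ t : ℝ, 0 ≤ t → ‖S₀ t‖ ≤ 1)
    (hS₁0 : S₁ 0 = ContinuousLinearMap.id ℝ X)
    (hS₁add : ∀ s t : ℝ, 0 ≤ s → 0 ≤ t → S₁ (s + t) = (S₁ s).comp (S₁ t))
    (hS₁cont : ∀ x : X, ContinuousOn (fun t => S₁ t x) (Set.Ici 0))
    (hS₁pos : ∀ t : ℝ, 0 ≤ t → ∀ x : X, 0 ≤ x → 0 ≤ S₁ t x)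
    (hS₁contr : ∀ t : ℝ, 0 ≤ t → ‖S₁ t‖ ≤ 1)
    -- generators G₀, G₁ with domains D₀ ⊆ D₁
    (D₀ D₁ : Set X) (hD : D₀ ⊆ D₁)
    (G₀ G₁ : X → X)
    (hgen₀ : ∀ x ∈ D₀, Filter.Tendsto (fun t : ℝ => t⁻¹ • (S₀ t x - x))
      (nhdsWithin 0 (Set.Ioi 0)) (nhds (G₀ x)))
    (hgen₀max : ∀ x : X, (∃ g : X, Filter.Tendsto (fun t : ℝ => t⁻¹ • (S₀ t x - x))
      (nhdsWithin 0 (Set.Ioi 0)) (nhds g)) → x ∈ D₀)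
    (hgen₁ : ∀ x ∈ D₁, Filter.Tendsto (fun t : ℝ => t⁻¹ • (S₁ t x - x))
      (nhdsWithin 0 (Set.Ioi 0)) (nhds (G₁ x)))
    (hgen₁max : ∀ x : X, (∃ g : X, Filter.Tendsto (fun t : ℝ => t⁻¹ • (S₁ t x - x))
      (nhdsWithin 0 (Set.Ioi 0)) (nhds g)) → x ∈ D₁)
    -- the semigroup S generated by G₀ + G₁ with domain D₀
    (S : ℝ → X →L[ℝ] X)
    (hS0 : S 0 = ContinuousLinearMap.id ℝ X)
    (hSadd : ∀ s t : ℝ, 0 ≤ s → 0 ≤ t → S (s + t) = (S s).comp (S t))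
    (hScont : ∀ x : X, ContinuousOn (fun t => S t x) (Set.Ici 0))
    (hgen : ∀ x ∈ D₀, Filter.Tendsto (fun t : ℝ => t⁻¹ • (S t x - x))
      (nhdsWithin 0 (Set.Ioi 0)) (nhds (G₀ x + G₁ x)))
    (hgenmax : ∀ x : X, (∃ g : X, Filter.Tendsto (fun t : ℝ => t⁻¹ • (S t x - x))
      (nhdsWithin 0 (Set.Ioi 0)) (nhds g)) → x ∈ D₀) :
    ∀ t : ℝ, 0 ≤ t → (∀ x : X, 0 ≤ x → 0 ≤ S t x) ∧ ‖S t‖ ≤ 1 := by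
  classical
  -- contraction application helper
  have happly : ∀ (T : X →L[ℝ] X), ‖T‖ ≤ 1 → ∀ w : X, ‖T w‖ ≤ ‖w‖ := fun T hT w =>
    (T.le_opNorm w).trans (mul_le_of_le_one_left (norm_nonneg w) hT)
  have hVcontr : ∀ h : ℝ, 0 ≤ h → ∀ z : X, ‖S₀ h (S₁ h z)‖ ≤ ‖z‖ := by
    intro h hh z
    exact (happly _ (hS₀contr h hh) _).trans (happly _ (hS₁contr h hh) z)
  have hnegLip : ∀ a b : X, ‖a⁻ - b⁻‖ ≤ ‖a - b‖ := by
    intro a b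
    have := lipschitzWith_negPart.dist_le_mul a b
    rwa [dist_eq_norm, dist_eq_norm, NNReal.coe_one, one_mul] at this
  have hVneg : ∀ h : ℝ, 0 ≤ h → ∀ z : X, ‖(S₀ h (S₁ h z))⁻‖ ≤ ‖z⁻‖ := by
    intro h hh z
    exact aux_negPart_bound ((S₀ h).comp (S₁ h))
      (fun w hw => hS₀pos h hh _ (hS₁pos h hh w hw))
      (fun w => hVcontr h hh w) z
  -- Step 1: the products S₀ h ∘ S₁ h have right derivative G₀ + G₁ on D₀ at h = 0
  have hVgen : ∀ y ∈ D₀, Filter.Tendsto (fun h : ℝ => h⁻¹ • (S₀ h (S₁ h y) - y))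
      (nhdsWithin 0 (Set.Ioi 0)) (nhds (G₀ y + G₁ y)) := by
    intro y hy
    have hc1 : Filter.Tendsto (fun h : ℝ => ‖h⁻¹ • (S₁ h y - y) - G₁ y‖)
        (nhdsWithin 0 (Set.Ioi 0)) (nhds 0) :=
      tendsto_iff_norm_sub_tendsto_zero.1 (hgen₁ y (hD hy))
    have hc2 : Filter.Tendsto (fun h : ℝ => ‖S₀ h (G₁ y) - G₁ y‖)
        (nhdsWithin 0 (Set.Ioi 0)) (nhds 0) := by
      have hcw : Filter.Tendsto (fun h : ℝ => S₀ h (G₁ y)) (nhdsWithin 0 (Set.Ioi 0))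
          (nhds (S₀ 0 (G₁ y))) :=
        (hS₀cont (G₁ y) 0 Set.self_mem_Ici).mono_left (nhdsWithin_mono 0 Set.Ioi_subset_Ici_self)
      rw [hS₀0] at hcw
      simpa using tendsto_iff_norm_sub_tendsto_zero.1 hcw
    have key : Filter.Tendsto (fun h : ℝ => S₀ h (h⁻¹ • (S₁ h y - y)))
        (nhdsWithin 0 (Set.Ioi 0)) (nhds (G₁ y)) := by
      rw [tendsto_iff_norm_sub_tendsto_zero]
      have hb : ∀ᶠ h in nhdsWithin (0:ℝ) (Set.Ioi 0),
          ‖S₀ h (h⁻¹ • (S₁ h y - y)) - G₁ y‖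
            ≤ ‖h⁻¹ • (S₁ h y - y) - G₁ y‖ + ‖S₀ h (G₁ y) - G₁ y‖ := by
        filter_upwards [eventually_mem_nhdsWithin] with h hh
        have hh0 : (0:ℝ) < h := hh
        have hsplit : S₀ h (h⁻¹ • (S₁ h y - y)) - G₁ y
            = S₀ h (h⁻¹ • (S₁ h y - y) - G₁ y) + (S₀ h (G₁ y) - G₁ y) := by
          rw [(S₀ h).map_sub]; abel
        rw [hsplit]
        exact (norm_add_le _ _).trans
          (add_le_add_left (happly _ (hS₀contr h hh0.le) _) _)
      exact squeeze_zero' (Filter.Eventually.of_forall fun h => norm_nonneg _) hb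
        (by simpa using hc1.add hc2)
    have key0 : Filter.Tendsto
        (fun h : ℝ => S₀ h (h⁻¹ • (S₁ h y - y)) + h⁻¹ • (S₀ h y - y))
        (nhdsWithin 0 (Set.Ioi 0)) (nhds (G₁ y + G₀ y)) := key.add (hgen₀ y hy)
    rw [add_comm (G₁ y)] at key0
    apply key0.congr'
    filter_upwards [eventually_mem_nhdsWithin] with h hh
    have hh0 : (0:ℝ) < h := hh
    rw [(S₀ h).map_smul, (S₀ h).map_sub, ← smul_add]
    congr 1
    abel
  -- Step 2: S h y - S₀ h (S₁ h y) = o(h) on D₀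
  have herr : ∀ y ∈ D₀, Filter.Tendsto (fun h : ℝ => ‖h⁻¹ • (S h y - S₀ h (S₁ h y))‖)
      (nhdsWithin 0 (Set.Ioi 0)) (nhds 0) := by
    intro y hy
    have := (hgen y hy).sub (hVgen y hy)
    rw [sub_self] at this
    have heq : Filter.Tendsto (fun h : ℝ => h⁻¹ • (S h y - S₀ h (S₁ h y)))
        (nhdsWithin 0 (Set.Ioi 0)) (nhds 0) := by
      apply this.congr
      intro h
      rw [← smul_sub]
      congr 1
      abel
    simpa using heq.norm
  -- Step 3: S s maps D₀ to D₀
  have hDinv : ∀ y ∈ D₀, ∀ s : ℝ, 0 ≤ s → S s y ∈ D₀ := by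
    intro y hy s hs
    apply hgenmax
    refine ⟨S s (G₀ y + G₁ y), ?_⟩
    have := ((S s).continuous.tendsto (G₀ y + G₁ y)).comp (hgen y hy)
    apply this.congr'
    filter_upwards [eventually_mem_nhdsWithin] with h hh
    have hh0 : (0:ℝ) < h := hh
    have hcomm : S h (S s y) = S s (S h y) := by
      have e1 := hSadd h s hh0.le hs
      have e2 := hSadd s h hs hh0.le
      calc S h (S s y) = S (h + s) y := by rw [e1]; rfl
        _ = S (s + h) y := by rw [add_comm]
        _ = S s (S h y) := by rw [e2]; rfl
    simp only [Function.comp_apply]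
    rw [(S s).map_smul, (S s).map_sub, hcomm]
  -- common slope estimate machinery
  have hslope : ∀ y ∈ D₀, ∀ r : ℝ, 0 < r → ∀ᶠ h in nhdsWithin (0:ℝ) (Set.Ioi 0),
      0 < h ∧ ‖S h y - S₀ h (S₁ h y)‖ / h < r := by
    intro y hy r hr
    filter_upwards [eventually_mem_nhdsWithin, (herr y hy).eventually_lt_const hr]
      with h hh hlt
    have hh0 : (0:ℝ) < h := hh
    refine ⟨hh0, ?_⟩
    rwa [norm_smul, norm_inv, Real.norm_eq_abs, abs_of_pos hh0, ← div_eq_inv_mul] at hlt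
  -- Step 4: contraction on D₀
  have hcontrD : ∀ y ∈ D₀, ∀ b : ℝ, 0 ≤ b → ‖S b y‖ ≤ ‖y‖ := by
    intro y hy b hb
    have hcont : ContinuousOn (fun t : ℝ => ‖S t y‖) (Set.Icc 0 b) :=
      continuous_norm.comp_continuousOn ((hScont y).mono (Set.Icc_subset_Ici_self))
    have := aux_dini hb hcont ?_
    · simpa [hS0] using this
    intro x hx r hr
    have hyx : S x y ∈ D₀ := hDinv y hy x hx.1
    filter_upwards [hslope _ hyx r hr] with h hh
    obtain ⟨hh0, hlt⟩ := hh
    have hSplit : S (x + h) y = S h (S x y) := by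
      rw [add_comm, hSadd h x hh0.le hx.1]; rfl
    have e1 : ‖S (x + h) y‖ - ‖S x y‖ ≤ ‖S h (S x y) - S₀ h (S₁ h (S x y))‖ := by
      rw [hSplit]
      have e2 := norm_sub_norm_le (S h (S x y)) (S₀ h (S₁ h (S x y)))
      have e3 := hVcontr h hh0.le (S x y)
      linarith
    calc (‖S (x + h) y‖ - ‖S x y‖) / h
        ≤ ‖S h (S x y) - S₀ h (S₁ h (S x y))‖ / h := by gcongr
      _ < r := hlt
  -- Step 5: positivity on D₀
  have hposD : ∀ y ∈ D₀, 0 ≤ y → ∀ b : ℝ, 0 ≤ b → 0 ≤ S b y := by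
    intro y hy hy0 b hb
    have hcont : ContinuousOn (fun t : ℝ => ‖(S t y)⁻‖) (Set.Icc 0 b) :=
      (continuous_norm.comp continuous_negPart).comp_continuousOn
        ((hScont y).mono (Set.Icc_subset_Ici_self))
    have hdini := aux_dini hb hcont ?_
    · have h0 : ‖((S 0 y))⁻‖ = 0 := by
        rw [hS0]
        simpa using norm_eq_zero.2 (negPart_eq_zero.2 hy0)
      rw [h0] at hdini
      have : (S b y)⁻ = 0 := norm_le_zero_iff.1 hdini
      exact negPart_eq_zero.1 this
    intro x hx r hr
    have hyx : S x y ∈ D₀ := hDinv y hy x hx.1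
    filter_upwards [hslope _ hyx r hr] with h hh
    obtain ⟨hh0, hlt⟩ := hh
    have hSplit : S (x + h) y = S h (S x y) := by
      rw [add_comm, hSadd h x hh0.le hx.1]; rfl
    have e1 : ‖(S (x + h) y)⁻‖ - ‖(S x y)⁻‖ ≤ ‖S h (S x y) - S₀ h (S₁ h (S x y))‖ := by
      rw [hSplit]
      have e2 := norm_sub_norm_le ((S h (S x y))⁻) ((S₀ h (S₁ h (S x y)))⁻)
      have e3 := hnegLip (S h (S x y)) (S₀ h (S₁ h (S x y)))
      have e4 := hVneg h hh0.le (S x y)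
      linarith
    calc (‖(S (x + h) y)⁻‖ - ‖(S x y)⁻‖) / h
        ≤ ‖S h (S x y) - S₀ h (S₁ h (S x y))‖ / h := by gcongr
      _ < r := hlt
  -- Step 6: density of D₀ (with positive approximants for positive vectors)
  have hdense : ∀ x : X, ∀ ε : ℝ, 0 < ε → ∃ z ∈ D₀, ‖z - x‖ ≤ ε ∧ (0 ≤ x → 0 ≤ z) := by
    intro x ε hε
    have hca : ContinuousWithinAt (fun s : ℝ => S₀ s x) (Set.Ici 0) 0 :=
      hS₀cont x 0 Set.self_mem_Ici
    rw [Metric.continuousWithinAt_iff] at hca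
    obtain ⟨δ, hδ, hδ'⟩ := hca ε hε
    set h : ℝ := δ/2 with hhdef
    have hh0 : 0 < h := by positivity
    have hInt : ∀ a b : ℝ, 0 ≤ a → 0 ≤ b →
        IntervalIntegrable (fun u : ℝ => S₀ u x) MeasureTheory.volume a b := by
      intro a b ha hb
      apply ((hS₀cont x).mono ?_).intervalIntegrable
      intro s hs
      rw [Set.mem_uIcc] at hs
      rcases hs with hs | hs <;> [exact le_trans ha hs.1; exact le_trans hb hs.1]
    set z : X := h⁻¹ • ∫ s in (0:ℝ)..h, S₀ s x with hzdef
    have hSid : ∀ w : X, S₀ 0 w = w := by intro w; rw [hS₀0]; rfl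
    -- z is close to x
    have hzx : ‖z - x‖ ≤ ε := by
      have hxconst : (∫ _ in (0:ℝ)..h, x) = h • x := by
        rw [intervalIntegral.integral_const]; congr 1; ring
      have hrepr : z - x = h⁻¹ • ∫ s in (0:ℝ)..h, (S₀ s x - x) := by
        rw [intervalIntegral.integral_sub (hInt 0 h le_rfl hh0.le) intervalIntegrable_const,
          hxconst, smul_sub, smul_smul, inv_mul_cancel₀ hh0.ne', one_smul, hzdef]
      have hb : ‖∫ s in (0:ℝ)..h, (S₀ s x - x)‖ ≤ ε * |h - 0| := by
        apply intervalIntegral.norm_integral_le_of_norm_le_const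
        intro u hu
        rw [Set.uIoc_of_le hh0.le] at hu
        have hu0 : (0:ℝ) ≤ u := hu.1.le
        have : dist u 0 < δ := by
          rw [Real.dist_eq, sub_zero, abs_of_nonneg hu0]
          calc u ≤ h := hu.2
            _ < δ := by rw [hhdef]; linarith
        have := hδ' hu0 this
        rw [dist_eq_norm] at this
        simpa [hSid] using this.le
      rw [hrepr, norm_smul, norm_inv, Real.norm_eq_abs, abs_of_pos hh0]
      calc h⁻¹ * ‖∫ s in (0:ℝ)..h, (S₀ s x - x)‖ ≤ h⁻¹ * (ε * |h - 0|) := by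
            apply mul_le_mul_of_nonneg_left hb (by positivity)
        _ = ε := by rw [sub_zero, abs_of_pos hh0]; field_simp
    -- z is nonneg if x is
    have hzpos : 0 ≤ x → 0 ≤ z := by
      intro hx
      apply aux_smul_nonneg (by positivity : (0:ℝ) ≤ h⁻¹)
      apply aux_integral_nonneg' (fun c hc w hw => aux_smul_nonneg hc hw) hh0.le
        (hInt 0 h le_rfl hh0.le)
      intro s hs
      exact hS₀pos s hs.1.le x hx
    -- z belongs to D₀
    have hzD : z ∈ D₀ := by
      apply hgen₀max
      refine ⟨h⁻¹ • (S₀ h x - x), ?_⟩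
      have hT1 : Filter.Tendsto (fun t : ℝ => t⁻¹ • ∫ s in h..(h+t), S₀ s x)
          (nhdsWithin 0 (Set.Ioi 0)) (nhds (S₀ h x)) := aux_ftc (hS₀cont x) hh0.le
      have hT2 : Filter.Tendsto (fun t : ℝ => t⁻¹ • ∫ s in (0:ℝ)..(0+t), S₀ s x)
          (nhdsWithin 0 (Set.Ioi 0)) (nhds x) := by
        have := aux_ftc (hS₀cont x) (le_refl (0:ℝ))
        rwa [hSid] at this
      have hlim := (hT1.sub hT2).const_smul (h⁻¹)
      simp only [← smul_sub] at hlim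
      have hfinal : (h⁻¹ • (S₀ h x - x)) = h⁻¹ • (S₀ h x - x) := rfl
      apply hlim.congr'
      filter_upwards [eventually_mem_nhdsWithin] with t ht
      have ht0 : (0:ℝ) < t := ht
      -- compute S₀ t z
      have h1 : S₀ t z = h⁻¹ • ∫ s in (0:ℝ)..h, S₀ t (S₀ s x) := by
        rw [hzdef, (S₀ t).map_smul, (S₀ t).intervalIntegral_comp_comm (hInt 0 h le_rfl hh0.le)]
      have h2 : (∫ s in (0:ℝ)..h, S₀ t (S₀ s x)) = ∫ s in (0:ℝ)..h, S₀ (t + s) x := by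
        apply intervalIntegral.integral_congr
        intro s hs
        rw [Set.uIcc_of_le hh0.le] at hs
        show S₀ t (S₀ s x) = S₀ (t + s) x
        rw [hS₀add t s ht0.le hs.1]; rfl
      have h3 : (∫ s in (0:ℝ)..h, S₀ (t + s) x) = ∫ s in t..(t+h), S₀ s x := by
        simpa using intervalIntegral.integral_comp_add_left (fun u : ℝ => S₀ u x) t (a := 0) (b := h)
      have hadd1 : (∫ s in (0:ℝ)..t, S₀ s x) + (∫ s in t..(t+h), S₀ s x)
          = ∫ s in (0:ℝ)..(t+h), S₀ s x :=
        intervalIntegral.integral_add_adjacent_intervals (hInt 0 t le_rfl ht0.le)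
          (hInt t (t+h) ht0.le (by positivity))
      have hadd2 : (∫ s in (0:ℝ)..h, S₀ s x) + (∫ s in h..(t+h), S₀ s x)
          = ∫ s in (0:ℝ)..(t+h), S₀ s x :=
        intervalIntegral.integral_add_adjacent_intervals (hInt 0 h le_rfl hh0.le)
          (hInt h (t+h) hh0.le (by positivity))
      have hcomb : (∫ s in t..(t+h), S₀ s x) - (∫ s in (0:ℝ)..h, S₀ s x)
          = (∫ s in h..(t+h), S₀ s x) - (∫ s in (0:ℝ)..t, S₀ s x) := by
        have e := hadd1.trans hadd2.symm
        have e' : ((∫ s in (0:ℝ)..t, S₀ s x) + (∫ s in t..(t+h), S₀ s x))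
            - ((∫ s in (0:ℝ)..h, S₀ s x) + (∫ s in h..(t+h), S₀ s x)) = 0 := sub_eq_zero.2 e
        rw [← sub_eq_zero]
        calc (∫ s in t..(t+h), S₀ s x) - (∫ s in (0:ℝ)..h, S₀ s x)
              - ((∫ s in h..(t+h), S₀ s x) - (∫ s in (0:ℝ)..t, S₀ s x))
            = ((∫ s in (0:ℝ)..t, S₀ s x) + (∫ s in t..(t+h), S₀ s x))
              - ((∫ s in (0:ℝ)..h, S₀ s x) + (∫ s in h..(t+h), S₀ s x)) := by abel
          _ = 0 := e'
      have hht : h + t = t + h := add_comm h t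
      show h⁻¹ • (t⁻¹ • ((∫ s in h..(h+t), S₀ s x)
              - ∫ s in (0:ℝ)..(0+t), S₀ s x)) = t⁻¹ • (S₀ t z - z)
      calc h⁻¹ • (t⁻¹ • ((∫ s in h..(h+t), S₀ s x) - ∫ s in (0:ℝ)..(0+t), S₀ s x))
          = h⁻¹ • (t⁻¹ • ((∫ s in h..(t+h), S₀ s x) - ∫ s in (0:ℝ)..t, S₀ s x)) := by
            rw [hht, zero_add]
        _ = h⁻¹ • (t⁻¹ • ((∫ s in t..(t+h), S₀ s x) - ∫ s in (0:ℝ)..h, S₀ s x)) := by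
            rw [hcomb]
        _ = t⁻¹ • (S₀ t z - z) := by
            rw [h1, h2, h3, hzdef]
            simp only [← smul_sub]
            exact smul_comm _ _ _
    exact ⟨z, hzD, hzx, hzpos⟩
  -- Final assembly
  intro t ht
  constructor
  · -- positivity
    intro x hx
    have hseq : ∀ n : ℕ, ∃ z : X, z ∈ D₀ ∧ ‖z - x‖ ≤ 1/(n+1) ∧ 0 ≤ z := by
      intro n
      obtain ⟨z, hzD, hzx, hzpos⟩ := hdense x (1/(n+1)) (by positivity)
      exact ⟨z, hzD, hzx, hzpos hx⟩
    choose zs hzD hzx hzpos using hseq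
    have hzlim : Filter.Tendsto zs Filter.atTop (nhds x) := by
      rw [tendsto_iff_norm_sub_tendsto_zero]
      apply squeeze_zero (fun n => norm_nonneg _) (fun n => hzx n)
      exact tendsto_one_div_add_atTop_nhds_zero_nat
    have hSlim : Filter.Tendsto (fun n => S t (zs n)) Filter.atTop (nhds (S t x)) :=
      ((S t).continuous.tendsto x).comp hzlim
    have hmem : ∀ n, S t (zs n) ∈ Set.Ici (0:X) := fun n => hposD (zs n) (hzD n) (hzpos n) t ht
    exact isClosed_Ici.mem_of_tendsto hSlim (Filter.Eventually.of_forall hmem)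
  · -- contraction
    apply ContinuousLinearMap.opNorm_le_bound _ zero_le_one
    intro x
    rw [one_mul]
    apply le_of_forall_pos_le_add
    intro ε' hε'
    have hN : (0:ℝ) < 1 + ‖S t‖ := by positivity
    obtain ⟨z, hzD, hzx, -⟩ := hdense x (ε' / (1 + ‖S t‖)) (by positivity)
    have e1 : ‖S t x‖ ≤ ‖S t z‖ + ‖S t (x - z)‖ := by
      have : S t x = S t z + S t (x - z) := by rw [← (S t).map_add]; congr 1; abel
      rw [this]; exact norm_add_le _ _
    have e2 : ‖S t z‖ ≤ ‖z‖ := hcontrD z hzD t ht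
    have e3 : ‖S t (x - z)‖ ≤ ‖S t‖ * (ε' / (1 + ‖S t‖)) := by
      calc ‖S t (x - z)‖ ≤ ‖S t‖ * ‖x - z‖ := (S t).le_opNorm _
        _ ≤ ‖S t‖ * (ε' / (1 + ‖S t‖)) := by
            apply mul_le_mul_of_nonneg_left _ (norm_nonneg _)
            rw [← norm_neg (x - z)]; simpa [neg_sub] using hzx
    have e4 : ‖z‖ ≤ ‖x‖ + ε' / (1 + ‖S t‖) := by
      calc ‖z‖ ≤ ‖x‖ + ‖z - x‖ := by
            have := norm_sub_norm_le z x; linarith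
        _ ≤ ‖x‖ + ε' / (1 + ‖S t‖) := by linarith
    have e5 : ‖S t‖ * (ε' / (1 + ‖S t‖)) + ε' / (1 + ‖S t‖) = ε' := by
      field_simp
      ring
    calc ‖S t x‖ ≤ ‖z‖ + ‖S t (x - z)‖ := by linarith
      _ ≤ (‖x‖ + ε' / (1 + ‖S t‖)) + ‖S t‖ * (ε' / (1 + ‖S t‖)) := by linarith
      _ = ‖x‖ + ε' := by linarith [e5]
end

section
/- Let w = (w_n) with w_n ≥ n monotone increasing, a_n ≥ 0, α ∈ [0,1), and w̃_n := (1+a_n)^α w_n. Suppose for a time τ the coagulation rates satisfy 0 ≤ k_{n,j}(t) ≤ c(τ) w̃_n w̃_j / w_{n+j} for all n,j and t ∈ [0,τ]. Let g = (g_n) be a nonnegative sequence with ∑ w̃_n g_n ≤ r, and let γ ≥ c(τ) r. Then for every n ≥ 1 and t ∈ [0,τ]: (1/2)∑_{j=1}^{n−1} k_{n−j,j}(t) g_{n−j} g_j − g_n ∑_{j=1}^∞ k_{n,j}(t) g_j + γ (a_n+1)^α g_n ≥ 0. -/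
theorem stmt_17
    (w : ℕ → ℝ)
    (hw : ∀ n : ℕ, 1 ≤ n → (n : ℝ) ≤ w n)
    (hwmono : ∀ n : ℕ, 1 ≤ n → w n ≤ w (n + 1))
    (a : ℕ → ℝ) (ha : ∀ n, 0 ≤ a n)
    (α : ℝ) (hα : α ∈ Set.Ico (0:ℝ) 1)
    (wt : ℕ → ℝ) (hwt : ∀ n, wt n = (1 + a n) ^ α * w n)
    (τ : ℝ) (hτ : 0 ≤ τ)
    (k : ℕ → ℕ → ℝ → ℝ)
    (c : ℝ) (hc : 0 < c)
    (hk : ∀ n j : ℕ, 1 ≤ n → 1 ≤ j → ∀ t ∈ Set.Icc (0:ℝ) τ,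
      0 ≤ k n j t ∧ k n j t ≤ c * wt n * wt j / w (n + j))
    (g : ℕ → ℝ) (hg : ∀ n, 0 ≤ g n)
    (hgsum : Summable (fun n : ℕ => wt (n + 1) * g (n + 1)))
    (r : ℝ) (hgr : ∑' n : ℕ, wt (n + 1) * g (n + 1) ≤ r)
    (γ : ℝ) (hγ : c * r ≤ γ) :
    ∀ n : ℕ, 1 ≤ n → ∀ t ∈ Set.Icc (0:ℝ) τ,
      0 ≤ (1/2) * ∑ j ∈ Finset.Ico 1 n, k (n - j) j t * g (n - j) * g j
            - g n * ∑' j : ℕ, k n (j + 1) t * g (j + 1)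
            + γ * (a n + 1) ^ α * g n := by
  intro n hn t ht
  -- monotonicity of w
  have hwmono' : ∀ m : ℕ, 1 ≤ m → ∀ j : ℕ, w m ≤ w (m + j) := by
    intro m hm j
    induction j with
    | zero => simp
    | succ j ih => exact ih.trans (hwmono (m + j) (by omega))
  have hwpos : ∀ m : ℕ, 1 ≤ m → 0 < w m := fun m hm =>
    lt_of_lt_of_le (by exact_mod_cast hm) (hw m hm)
  have hPpos : 0 < (1 + a n) ^ α := Real.rpow_pos_of_pos (by linarith [ha n]) α
  have hwtnn : ∀ m : ℕ, 1 ≤ m → 0 ≤ wt m := by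
    intro m hm
    rw [hwt m]
    exact mul_nonneg (Real.rpow_nonneg (by linarith [ha m]) α) (hwpos m hm).le
  -- first sum nonneg
  have hsum1 : 0 ≤ ∑ j ∈ Finset.Ico 1 n, k (n - j) j t * g (n - j) * g j := by
    apply Finset.sum_nonneg
    intro j hj
    simp only [Finset.mem_Ico] at hj
    exact mul_nonneg (mul_nonneg ((hk (n - j) j (by omega) hj.1 t ht).1) (hg _)) (hg _)
  -- key bound
  have key : ∀ j : ℕ, k n (j + 1) t * g (j + 1) ≤
      (c * (1 + a n) ^ α) * (wt (j + 1) * g (j + 1)) := by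
    intro j
    have hk' := hk n (j + 1) hn (by omega) t ht
    have hkle : k n (j + 1) t ≤ c * (1 + a n) ^ α * wt (j + 1) := by
      refine hk'.2.trans ?_
      rw [hwt n]
      have hpos : 0 < w (n + (j + 1)) := hwpos _ (by omega)
      rw [div_le_iff₀ hpos]
      have h1 : w n ≤ w (n + (j + 1)) := hwmono' n hn (j + 1)
      have h2 : 0 ≤ c * (1 + a n) ^ α * wt (j + 1) :=
        mul_nonneg (mul_nonneg hc.le hPpos.le) (hwtnn _ (by omega))
      nlinarith [hwtnn (j + 1) (by omega), hPpos]
    calc k n (j + 1) t * g (j + 1) ≤ (c * (1 + a n) ^ α * wt (j + 1)) * g (j + 1) :=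
          mul_le_mul_of_nonneg_right hkle (hg _)
      _ = (c * (1 + a n) ^ α) * (wt (j + 1) * g (j + 1)) := by ring
  have hnn : ∀ j : ℕ, 0 ≤ k n (j + 1) t * g (j + 1) := fun j =>
    mul_nonneg (hk n (j + 1) hn (by omega) t ht).1 (hg _)
  have hsummable : Summable (fun j : ℕ => k n (j + 1) t * g (j + 1)) :=
    Summable.of_nonneg_of_le hnn key (hgsum.mul_left _)
  have hS : ∑' j : ℕ, k n (j + 1) t * g (j + 1) ≤ (c * (1 + a n) ^ α) * r := by
    calc ∑' j : ℕ, k n (j + 1) t * g (j + 1)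
        ≤ ∑' j : ℕ, (c * (1 + a n) ^ α) * (wt (j + 1) * g (j + 1)) :=
          Summable.tsum_le_tsum key hsummable (hgsum.mul_left _)
      _ = (c * (1 + a n) ^ α) * ∑' j : ℕ, wt (j + 1) * g (j + 1) := tsum_mul_left
      _ ≤ (c * (1 + a n) ^ α) * r :=
          mul_le_mul_of_nonneg_left hgr (mul_nonneg hc.le hPpos.le)
  have hfin : g n * ∑' j : ℕ, k n (j + 1) t * g (j + 1) ≤ γ * (a n + 1) ^ α * g n := by
    have h1 : (c * (1 + a n) ^ α) * r ≤ γ * (1 + a n) ^ α := by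
      have := mul_le_mul_of_nonneg_right hγ hPpos.le
      nlinarith
    have h2 : g n * ∑' j : ℕ, k n (j + 1) t * g (j + 1) ≤ g n * (γ * (1 + a n) ^ α) :=
      mul_le_mul_of_nonneg_left (hS.trans h1) (hg n)
    rw [add_comm (a n) 1]
    linarith
  linarith
end

section
/- Let p > 1, c_p := p for p ∈ (1,2] and c_p := 2^p − 2 for p > 2, and let k_{n,j} ≥ 0 be symmetric with k_{n,j} ≤ μ(n+j) for some μ > 0. Let (u_n) be a nonnegative sequence with ∑_{n=1}^∞ n u_n ≤ M₁ and ∑_{n=1}^∞ n^p u_n < ∞. Then (1/2) ∑_{n=1}^∞ ∑_{j=1}^∞ ((n+j)^p − n^p − j^p) k_{n,j} u_n u_j ≤ c_p μ M₁ ∑_{n=1}^∞ n^p u_n. -/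
open Real Set

lemma my_rpow_superadd {p x y : ℝ} (hp : 1 ≤ p) (hx : 0 ≤ x) (hy : 0 ≤ y) :
    x ^ p + y ^ p ≤ (x + y) ^ p := by
  have h := NNReal.coe_le_coe.2 (NNReal.add_rpow_le_rpow_add (x.toNNReal) (y.toNNReal) hp)
  push_cast [NNReal.coe_rpow, Real.coe_toNNReal x hx, Real.coe_toNNReal y hy] at h
  exact h

lemma my_rpow_subadd {p x y : ℝ} (hp0 : 0 ≤ p) (hp : p ≤ 1) (hx : 0 ≤ x) (hy : 0 ≤ y) :
    (x + y) ^ p ≤ x ^ p + y ^ p := by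
  have h := NNReal.coe_le_coe.2 (NNReal.rpow_add_le_add_rpow (x.toNNReal) (y.toNNReal) hp0 hp)
  push_cast [NNReal.coe_rpow, Real.coe_toNNReal x hx, Real.coe_toNNReal y hy] at h
  exact h

lemma my_mul_rpow {z p : ℝ} (hz : 0 ≤ z) (hp : p + 1 ≠ 0) : z * z ^ p = z ^ (p + 1) := by
  rcases eq_or_lt_of_le hz with h | h
  · rw [← h, Real.zero_rpow hp, zero_mul]
  · rw [Real.rpow_add_one h.ne']; ring

lemma my_bernoulli {r : ℝ} (hr1 : 1 ≤ r) (hr2 : r ≤ 2) {t : ℝ} (ht : 0 ≤ t) :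
    (1 + t) ^ r ≤ 1 + r * t + t ^ r := by
  have hr0 : (0:ℝ) ≤ r := by linarith
  set g : ℝ → ℝ := fun t => 1 + r * t + t ^ r - (1 + t) ^ r with hg
  have hcont : Continuous g := by
    apply Continuous.sub
    · exact (continuous_const.add (continuous_const.mul continuous_id)).add
        (Real.continuous_rpow_const hr0)
    · exact (Real.continuous_rpow_const hr0).comp (continuous_const.add continuous_id)
  have hderiv : ∀ x : ℝ, 0 < x → HasDerivAt g (r + r * x ^ (r-1) - 1 * r * (1+x) ^ (r-1)) x := by
    intro x hx
    have h1 : HasDerivAt (fun y : ℝ => 1 + r * y) r x := by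
      simpa using ((hasDerivAt_id x).const_mul r).const_add 1
    have h2 : HasDerivAt (fun y : ℝ => y ^ r) (r * x ^ (r-1)) x :=
      Real.hasDerivAt_rpow_const (Or.inl hx.ne')
    have h3 : HasDerivAt (fun y : ℝ => (1 + y) ^ r) (1 * r * (1+x) ^ (r-1)) x :=
      by simpa using ((hasDerivAt_id x).const_add 1).rpow_const (Or.inr hr1)
    exact (h1.add h2).sub h3
  have hmono : MonotoneOn g (Ici (0:ℝ)) := by
    apply monotoneOn_of_deriv_nonneg (convex_Ici 0) hcont.continuousOn
    · intro x hx
      rw [interior_Ici] at hx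
      exact ((hderiv x hx).differentiableAt).differentiableWithinAt
    · intro x hx
      rw [interior_Ici] at hx
      rw [(hderiv x hx).deriv]
      have hsub : (1 + x) ^ (r-1) ≤ 1 + x ^ (r-1) := by
        have := my_rpow_subadd (by linarith : (0:ℝ) ≤ r - 1) (by linarith) zero_le_one hx.le
        simpa using this
      nlinarith [Real.rpow_nonneg hx.le (r-1)]
  have h0 : g 0 = 0 := by
    simp [hg, Real.zero_rpow (by positivity : r ≠ 0), Real.one_rpow]
  have := hmono (self_mem_Ici) (mem_Ici.2 ht) ht
  rw [h0] at this
  simp only [hg] at this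
  linarith

lemma my_bernoulli' {r : ℝ} (hr1 : 1 < r) (hr2 : r ≤ 2) {x y : ℝ} (hx : 0 ≤ x) (hy : 0 ≤ y) :
    (x + y) ^ r ≤ x ^ r + r * x ^ (r-1) * y + y ^ r := by
  rcases eq_or_lt_of_le hx with h | hx0
  · rw [← h]
    rw [Real.zero_rpow (by positivity : r ≠ 0), Real.zero_rpow (by intro hc; rw [sub_eq_zero] at hc; exact absurd hc.symm hr1.ne)]
    simp
  · have ht : 0 ≤ y / x := by positivity
    have hb := my_bernoulli hr1.le hr2 ht
    have hmul := mul_le_mul_of_nonneg_left hb (Real.rpow_nonneg hx0.le r)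
    have e1 : x ^ r * (1 + y/x) ^ r = (x + y) ^ r := by
      rw [← Real.mul_rpow hx0.le (by positivity)]
      congr 1
      field_simp
    have e2 : x ^ r * (y / x) = x ^ (r - 1) * y := by
      rw [Real.rpow_sub_one hx0.ne']
      field_simp
    have e3 : x ^ r * (y / x) ^ r = y ^ r := by
      rw [← Real.mul_rpow hx0.le ht]
      congr 1
      field_simp
    calc (x + y) ^ r = x ^ r * (1 + y/x) ^ r := e1.symm
      _ ≤ x ^ r * (1 + r * (y/x) + (y/x) ^ r) := hmul
      _ = x ^ r + r * (x ^ r * (y/x)) + x ^ r * (y/x) ^ r := by ring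
      _ = x ^ r + r * x ^ (r-1) * y + y ^ r := by rw [e2, e3]; ring

lemma my_ineq_V {p : ℝ} (hp1 : 1 < p) (hp2 : p ≤ 2) {x y : ℝ} (hx : 0 ≤ x) (hy : 0 ≤ y) :
    (x + y) ^ (p+1) ≤ x ^ (p+1) + y ^ (p+1) + (p+1) * (x ^ p * y + x * y ^ p) := by
  set q : ℝ := p + 1 with hq
  have hq2 : (2:ℝ) < q := by simp [hq]; linarith
  have hq3 : q ≤ 3 := by simp [hq]; linarith
  rcases eq_or_lt_of_le hy with h | hy0
  · rw [← h]
    rw [Real.zero_rpow (by positivity : q ≠ 0), Real.zero_rpow (by positivity : p ≠ 0)]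
    simp
  -- monotone in x
  set f : ℝ → ℝ := fun x => x ^ q + y ^ q + q * (x ^ (q-1) * y) + q * (x * y ^ (q-1))
      - (x + y) ^ q with hf
  have hcont : Continuous f := by
    have c1 : Continuous fun x : ℝ => x ^ q := Real.continuous_rpow_const (by linarith)
    have c2 : Continuous fun x : ℝ => x ^ (q-1) := Real.continuous_rpow_const (by linarith)
    have c3 : Continuous fun x : ℝ => (x + y) ^ q :=
      (Real.continuous_rpow_const (by linarith)).comp (continuous_id.add continuous_const)
    fun_prop
  have hderiv : ∀ z : ℝ, 0 < z → HasDerivAt f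
      (q * z ^ (q-1) + q * (((q-1) * z ^ (q-1-1)) * y) + q * (1 * y ^ (q-1))
        - 1 * q * (z + y) ^ (q-1)) z := by
    intro z hz
    have h1 : HasDerivAt (fun x : ℝ => x ^ q) (q * z ^ (q-1)) z :=
      Real.hasDerivAt_rpow_const (Or.inl hz.ne')
    have h2 : HasDerivAt (fun x : ℝ => x ^ (q-1)) ((q-1) * z ^ (q-1-1)) z :=
      Real.hasDerivAt_rpow_const (Or.inl hz.ne')
    have h3 : HasDerivAt (fun x : ℝ => (x + y) ^ q) (1 * q * (z + y) ^ (q-1)) z := by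
      simpa using ((hasDerivAt_id z).add_const y).rpow_const (Or.inr (by linarith))
    have h4 := (((h1.add_const (y ^ q)).add ((h2.mul_const y).const_mul q)).add
      (((hasDerivAt_id z).mul_const (y ^ (q-1))).const_mul q)).sub h3
    exact h4
  have hmono : MonotoneOn f (Ici (0:ℝ)) := by
    apply monotoneOn_of_deriv_nonneg (convex_Ici 0) hcont.continuousOn
    · intro z hz
      rw [interior_Ici] at hz
      exact ((hderiv z hz).differentiableAt).differentiableWithinAt
    · intro z hz
      rw [interior_Ici] at hz
      rw [(hderiv z hz).deriv]
      have hb := my_bernoulli' hp1 hp2 hz.le hy0.le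
      have e1 : q - 1 = p := by simp [hq]
      rw [e1]
      have hq0 : (0:ℝ) ≤ q := by linarith
      nlinarith [mul_le_mul_of_nonneg_left hb hq0]
  have h0 : f 0 = 0 := by
    simp [hf, Real.zero_rpow (by positivity : q ≠ 0),
      Real.zero_rpow (show q - 1 ≠ 0 by intro hc; rw [sub_eq_zero] at hc; simp [hq] at hc; linarith)]
  have := hmono (self_mem_Ici) (mem_Ici.2 hx) hx
  rw [h0] at this
  simp only [hf] at this
  have e1 : q - 1 = p := by simp [hq]
  rw [e1] at this
  linarith

lemma my_claim_W {q : ℝ} (hq : 3 < q) : 0 ≤ (q-4) * (2:ℝ) ^ (q-2) + 2 := by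
  rcases le_or_gt 4 q with h4 | h4
  · have : (0:ℝ) ≤ (q-4) * (2:ℝ) ^ (q-2) :=
      mul_nonneg (by linarith) (Real.rpow_pos_of_pos two_pos _).le
    linarith
  · set s : ℝ := q - 3 with hs
    have hs0 : 0 < s := by simp [hs]; linarith
    have hs1 : s < 1 := by simp [hs]; linarith
    have e1 : (2:ℝ) ^ (q-2) = 2 * 2 ^ s := by
      rw [show q - 2 = s + 1 by simp [hs]; ring, Real.rpow_add_one two_ne_zero]
      ring
    have e2 : (2:ℝ) ^ s = Real.exp (s * Real.log 2) := by
      rw [Real.rpow_def_of_pos two_pos, mul_comm]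
    have hlog1 : Real.log 2 ≤ 1 := by
      have := Real.log_le_sub_one_of_pos (two_pos (α := ℝ))
      linarith
    have hlog0 : 0 ≤ Real.log 2 := Real.log_nonneg one_le_two
    have hexp_mono : Real.exp (s * Real.log 2) ≤ Real.exp s :=
      Real.exp_le_exp.2 (by nlinarith)
    have hkey : (1 - s) * Real.exp s ≤ 1 := by
      have h1 : 1 - s ≤ Real.exp (-s) := by
        have := Real.add_one_le_exp (-s)
        linarith
      have h2 : (1 - s) * Real.exp s ≤ Real.exp (-s) * Real.exp s :=
        mul_le_mul_of_nonneg_right h1 (Real.exp_pos s).le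
      rwa [← Real.exp_add, neg_add_cancel, Real.exp_zero] at h2
    have : (1 - s) * Real.exp (s * Real.log 2) ≤ 1 := by
      calc (1 - s) * Real.exp (s * Real.log 2) ≤ (1 - s) * Real.exp s :=
            mul_le_mul_of_nonneg_left hexp_mono (by linarith)
        _ ≤ 1 := hkey
    have h4q : q - 4 = -(1 - s) := by simp [hs]; ring
    rw [e1, h4q, e2]
    nlinarith [Real.exp_pos (s * Real.log 2)]

lemma my_psi_mid {q C : ℝ} (hq : 3 < q) (hC : 0 ≤ C)
    (hpsi1 : 0 ≤ C * (q-2) * 1 + q - q * (1+1) ^ (q-2))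
    {v₁ v₂ : ℝ} (h1 : 1 ≤ v₂) (h2 : v₂ ≤ v₁)
    (hv1 : 0 ≤ C * (q-2) * v₁ + q - q * (1+v₁) ^ (q-2)) :
    0 ≤ C * (q-2) * v₂ + q - q * (1+v₂) ^ (q-2) := by
  rcases eq_or_lt_of_le (h1.trans h2) with hv₁1 | hv₁1
  · -- v₁ = 1 hence v₂ = 1
    have : v₂ = 1 := le_antisymm (hv₁1 ▸ h2) h1
    rw [this]; exact hpsi1
  · set θ : ℝ := (v₁ - v₂) / (v₁ - 1) with hθdef
    have hden : 0 < v₁ - 1 := by linarith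
    have hθ0 : 0 ≤ θ := div_nonneg (by linarith) hden.le
    have hθ1' : 0 ≤ 1 - θ := by
      rw [hθdef]
      rw [sub_nonneg, div_le_one hden]
      linarith
    have hsum : θ + (1 - θ) = 1 := by ring
    have hcomb : θ * 2 + (1 - θ) * (1 + v₁) = 1 + v₂ := by
      have hθm : θ * (v₁ - 1) = v₁ - v₂ := by rw [hθdef, div_mul_cancel₀ _ hden.ne']
      linear_combination -hθm
    have hconv := (convexOn_rpow (show (1:ℝ) ≤ q - 2 by linarith)).2
      (mem_Ici.2 (by norm_num : (0:ℝ) ≤ 2))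
      (mem_Ici.2 (by linarith : (0:ℝ) ≤ 1 + v₁)) hθ0 hθ1' hsum
    simp only [smul_eq_mul] at hconv
    rw [hcomb] at hconv
    have h2e : (1:ℝ) + 1 = 2 := by norm_num
    rw [h2e] at hpsi1
    have hqpos : (0:ℝ) < q := by linarith
    have hc2 : θ + (1-θ)*v₁ = v₂ := by nlinarith [hcomb]
    have A := mul_le_mul_of_nonneg_left hconv hqpos.le
    have B' := mul_le_mul_of_nonneg_left
      (show q * (2:ℝ)^(q-2) ≤ C*(q-2)*1 + q by linarith) hθ0
    have D' := mul_le_mul_of_nonneg_left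
      (show q * (1+v₁)^(q-2) ≤ C*(q-2)*v₁ + q by linarith) hθ1'
    have E : C*(q-2)*v₂ + q = θ*(C*(q-2)*1+q) + (1-θ)*(C*(q-2)*v₁+q) := by
      rw [← hc2]; ring
    linarith [A, B', D', E]

noncomputable def myN (q C : ℝ) : ℝ → ℝ :=
  fun t => 1 + t ^ q + C * (t + t ^ (q-1)) - (1+t) ^ q

noncomputable def myh (q C : ℝ) : ℝ → ℝ :=
  fun s => q * s ^ (q-1) + C * (1 + (q-1) * s ^ (q-2)) - q * (1+s) ^ (q-1)

noncomputable def myeta (q C : ℝ) : ℝ → ℝ :=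
  fun s => q * s ^ (q-2) + C * (q-2) * s ^ (q-3) - q * (1+s) ^ (q-2)

lemma myN_cont {q C : ℝ} (hq : 3 < q) : Continuous (myN q C) := by
  have c1 : Continuous fun t : ℝ => t ^ q := Real.continuous_rpow_const (by linarith)
  have c2 : Continuous fun t : ℝ => t ^ (q-1) := Real.continuous_rpow_const (by linarith)
  have c3 : Continuous fun t : ℝ => (1+t) ^ q :=
    (Real.continuous_rpow_const (by linarith)).comp (continuous_const.add continuous_id)
  unfold myN; fun_prop

lemma myh_cont {q C : ℝ} (hq : 3 < q) : Continuous (myh q C) := by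
  have c1 : Continuous fun s : ℝ => s ^ (q-1) := Real.continuous_rpow_const (by linarith)
  have c2 : Continuous fun s : ℝ => s ^ (q-2) := Real.continuous_rpow_const (by linarith)
  have c3 : Continuous fun s : ℝ => (1+s) ^ (q-1) :=
    (Real.continuous_rpow_const (by linarith)).comp (continuous_const.add continuous_id)
  unfold myh; fun_prop

lemma myN_deriv {q C : ℝ} (hq : 3 < q) {x : ℝ} (hx : 0 < x) :
    HasDerivAt (myN q C) (myh q C x) x := by
  have h1 : HasDerivAt (fun y : ℝ => y ^ q) (q * x ^ (q-1)) x :=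
    Real.hasDerivAt_rpow_const (Or.inl hx.ne')
  have h2 : HasDerivAt (fun y : ℝ => y ^ (q-1)) ((q-1) * x ^ (q-1-1)) x :=
    Real.hasDerivAt_rpow_const (Or.inl hx.ne')
  have h3 : HasDerivAt (fun y : ℝ => (1 + y) ^ q) (1 * q * (1+x) ^ (q-1)) x :=
    ((hasDerivAt_id' x).const_add 1).rpow_const (Or.inr (by linarith : 1 ≤ q))
  have h4 := ((h1.const_add 1).add (((hasDerivAt_id' x).add h2).const_mul C)).sub h3
  rw [show q-1-1 = q-2 by ring] at h4
  unfold myN myh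
  refine h4.congr_deriv ?_
  ring

lemma myh_deriv {q C : ℝ} (hq : 3 < q) {x : ℝ} (hx : 0 < x) :
    HasDerivAt (myh q C) ((q-1) * myeta q C x) x := by
  have h1 : HasDerivAt (fun y : ℝ => y ^ (q-1)) ((q-1) * x ^ (q-1-1)) x :=
    Real.hasDerivAt_rpow_const (Or.inl hx.ne')
  have h2 : HasDerivAt (fun y : ℝ => y ^ (q-2)) ((q-2) * x ^ (q-2-1)) x :=
    Real.hasDerivAt_rpow_const (Or.inl hx.ne')
  have h3 : HasDerivAt (fun y : ℝ => (1 + y) ^ (q-1)) (1 * (q-1) * (1+x) ^ (q-1-1)) x :=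
    ((hasDerivAt_id' x).const_add 1).rpow_const (Or.inr (by linarith : 1 ≤ q-1))
  have h4 := ((h1.const_mul q).add
    (((h2.const_mul (q-1)).const_add 1).const_mul C)).sub (h3.const_mul q)
  rw [show q-1-1 = q-2 by ring, show q-2-1 = q-3 by ring] at h4
  unfold myh myeta
  refine h4.congr_deriv ?_
  ring

lemma my_ineq_N {q : ℝ} (hq : 3 < q) {t : ℝ} (ht0 : 0 ≤ t) (ht1 : t ≤ 1) :
    (1 + t) ^ q ≤ 1 + t ^ q + ((2:ℝ) ^ (q-1) - 1) * (t + t ^ (q-1)) := by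
  have hq0 : (0:ℝ) < q := by linarith
  set C : ℝ := (2:ℝ) ^ (q-1) - 1 with hCdef
  have h2q1 : (1:ℝ) < (2:ℝ) ^ (q-1) := by
    rw [Real.one_lt_rpow_iff_of_pos (show (0:ℝ) < 2 by norm_num)]
    exact Or.inl ⟨one_lt_two, by linarith⟩
  have hCpos : 0 < C := by simp only [hCdef]; linarith
  have e21 : (2:ℝ) ^ (q-1) = 2 * (2:ℝ) ^ (q-2) := by
    rw [show q - 1 = (q-2) + 1 by ring, Real.rpow_add_one two_ne_zero]; ring
  have e2q : (2:ℝ) ^ q = 2 * (2:ℝ) ^ (q-1) := by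
    rw [show q = (q-1) + 1 by ring, Real.rpow_add_one two_ne_zero]; ring
  have N0 : myN q C 0 = 0 := by
    simp [myN, Real.zero_rpow hq0.ne',
      Real.zero_rpow (show q - 1 ≠ 0 by intro hc; rw [sub_eq_zero] at hc; linarith)]
  have N1 : myN q C 1 = 0 := by
    simp only [myN, Real.one_rpow, show (1:ℝ) + 1 = 2 by norm_num, hCdef]
    linarith [e2q]
  have h1eq : myh q C 1 = 0 := by
    simp only [myh, Real.one_rpow, mul_one, show (1:ℝ) + 1 = 2 by norm_num, hCdef]
    nlinarith [e21]
  have hpsi1 : 0 ≤ C * (q-2) * 1 + q - q * ((1:ℝ)+1) ^ (q-2) := by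
    have hW := my_claim_W hq
    rw [show ((1:ℝ)+1) = 2 by norm_num, hCdef, e21]
    nlinarith [hW]
  have eta1 : 0 ≤ myeta q C 1 := by
    simp only [myeta, Real.one_rpow, mul_one, show (1:ℝ) + 1 = 2 by norm_num]
    rw [show ((1:ℝ)+1) = 2 by norm_num] at hpsi1
    linarith [hpsi1]
  -- single sign-change property for η
  have etaP : ∀ s₁ s₂ : ℝ, 0 < s₁ → s₁ ≤ s₂ → s₂ ≤ 1 → 0 ≤ myeta q C s₁ → 0 ≤ myeta q C s₂ := by
    intro s₁ s₂ hs₁ h12 hs₂1 heta₁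
    have hs₂ : 0 < s₂ := lt_of_lt_of_le hs₁ h12
    -- translate to ψ
    have key : ∀ s : ℝ, 0 < s →
        (0 ≤ myeta q C s ↔ 0 ≤ C * (q-2) * (1/s) + q - q * (1+(1/s)) ^ (q-2)) := by
      intro s hs
      have hpow : (0:ℝ) < s ^ (2-q) := Real.rpow_pos_of_pos hs _
      have e1 : s ^ (2-q) * s ^ (q-2) = 1 := by
        rw [← Real.rpow_add hs]; norm_num
      have e2 : s ^ (2-q) * s ^ (q-3) = 1/s := by
        rw [← Real.rpow_add hs, show 2-q+(q-3) = -1 by ring, Real.rpow_neg_one]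
        exact (one_div s).symm
      have e3 : s ^ (2-q) * (1+s) ^ (q-2) = (1+(1/s)) ^ (q-2) := by
        rw [show (2-q : ℝ) = -(q-2) by ring, Real.rpow_neg hs.le, ← Real.inv_rpow hs.le,
          ← Real.mul_rpow (by positivity) (by positivity)]
        congr 1
        field_simp
        ring
      constructor
      · intro hh
        have := mul_nonneg hpow.le hh
        calc (0:ℝ) ≤ s ^ (2-q) * myeta q C s := this
          _ = C * (q-2) * (1/s) + q - q * (1+(1/s)) ^ (q-2) := by
              simp only [myeta]
              linear_combination q * e1 + (C*(q-2)) * e2 - q * e3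
      · intro hh
        have e4 : myeta q C s = s ^ (q-2) * (C * (q-2) * (1/s) + q - q * (1+(1/s)) ^ (q-2)) := by
          have hpow2 : (0:ℝ) < s ^ (q-2) := Real.rpow_pos_of_pos hs _
          have f1 : s ^ (q-2) * (1/s) = s ^ (q-3) := by
            rw [show (q-3 : ℝ) = (q-2) - 1 by ring, Real.rpow_sub_one hs.ne']
            field_simp
          have f3 : s ^ (q-2) * (1+(1/s)) ^ (q-2) = (1+s) ^ (q-2) := by
            rw [← Real.mul_rpow hs.le (by positivity)]
            congr 1
            field_simp
            ring
          simp only [myeta]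
          linear_combination (-(C*(q-2))) * f1 + q * f3
        rw [e4]
        exact mul_nonneg (Real.rpow_pos_of_pos hs _).le hh
    rw [key s₁ hs₁] at heta₁
    rw [key s₂ hs₂]
    have h1s₂ : 1 ≤ 1/s₂ := by
      rw [le_one_div (by norm_num) hs₂]; simpa using hs₂1
    have h21 : 1/s₂ ≤ 1/s₁ := by
      apply one_div_le_one_div_of_le hs₁ h12
    exact my_psi_mid hq hCpos.le (by simpa using hpsi1) h1s₂ h21 heta₁
  -- the splitting point
  set S : Set ℝ := {s : ℝ | s ∈ Ioc (0:ℝ) 1 ∧ 0 ≤ myeta q C s} with hSdef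
  have hS1 : (1:ℝ) ∈ S := ⟨⟨zero_lt_one, le_refl 1⟩, eta1⟩
  have hSne : S.Nonempty := ⟨1, hS1⟩
  have hSbdd : BddBelow S := ⟨0, fun x hx => (hx.1.1).le⟩
  set c : ℝ := sInf S with hcdef
  have hc0 : 0 ≤ c := le_csInf hSne (fun x hx => (hx.1.1).le)
  have hc1 : c ≤ 1 := csInf_le hSbdd hS1
  have etapos : ∀ s ∈ Ioo c 1, 0 ≤ myeta q C s := by
    intro s hs
    obtain ⟨s', hs'S, hs'lt⟩ := exists_lt_of_csInf_lt hSne (show sInf S < s from hs.1)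
    exact etaP s' s hs'S.1.1 hs'lt.le hs.2.le hs'S.2
  have etaneg : ∀ s ∈ Ioo (0:ℝ) c, myeta q C s ≤ 0 := by
    intro s hs
    by_contra hcon
    push_neg at hcon
    have hsS : s ∈ S := ⟨⟨hs.1, le_trans hs.2.le hc1⟩, hcon.le⟩
    exact absurd (csInf_le hSbdd hsS) (not_le.2 hs.2)
  -- Part A : on [c, 1], h is monotone, h 1 = 0, so h ≤ 0, so N antitone, so N ≥ N 1 = 0
  have hmonoh : MonotoneOn (myh q C) (Icc c 1) := by
    apply monotoneOn_of_deriv_nonneg (convex_Icc c 1) (myh_cont hq).continuousOn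
    · intro x hx
      rw [interior_Icc] at hx
      have hx0 : 0 < x := lt_of_le_of_lt hc0 hx.1
      exact ((myh_deriv hq hx0).differentiableAt).differentiableWithinAt
    · intro x hx
      rw [interior_Icc] at hx
      have hx0 : 0 < x := lt_of_le_of_lt hc0 hx.1
      rw [(myh_deriv hq hx0).deriv]
      exact mul_nonneg (by linarith) (etapos x hx)
  have hle0 : ∀ s ∈ Icc c 1, myh q C s ≤ 0 := by
    intro s hs
    have := hmonoh hs (right_mem_Icc.2 hc1) hs.2
    rwa [h1eq] at this
  have hNanti : AntitoneOn (myN q C) (Icc c 1) := by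
    apply antitoneOn_of_deriv_nonpos (convex_Icc c 1) (myN_cont hq).continuousOn
    · intro x hx
      rw [interior_Icc] at hx
      have hx0 : 0 < x := lt_of_le_of_lt hc0 hx.1
      exact ((myN_deriv hq hx0).differentiableAt).differentiableWithinAt
    · intro x hx
      rw [interior_Icc] at hx
      have hx0 : 0 < x := lt_of_le_of_lt hc0 hx.1
      rw [(myN_deriv hq hx0).deriv]
      exact hle0 x ⟨hx.1.le, hx.2.le⟩
  have NA : ∀ s ∈ Icc c 1, 0 ≤ myN q C s := by
    intro s hs
    have := hNanti hs (right_mem_Icc.2 hc1) hs.2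
    rwa [N1] at this
  -- Part B : on [0, c], N is concave, endpoints ≥ 0
  have NB : ∀ s ∈ Icc (0:ℝ) c, 0 ≤ myN q C s := by
    rcases eq_or_lt_of_le hc0 with hc0' | hc0'
    · intro s hs
      have : s = 0 := le_antisymm (by rw [hc0']; exact hs.2) hs.1
      rw [this, N0]
    · have hconc : ConcaveOn ℝ (Icc (0:ℝ) c) (myN q C) := by
        apply concaveOn_of_hasDerivWithinAt2_nonpos (convex_Icc 0 c)
          (myN_cont hq).continuousOn (f' := myh q C)
          (f'' := fun s => (q-1) * myeta q C s)
        · intro x hx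
          rw [interior_Icc] at hx
          exact ((myN_deriv hq hx.1).hasDerivWithinAt)
        · intro x hx
          rw [interior_Icc] at hx
          exact ((myh_deriv hq hx.1).hasDerivWithinAt)
        · intro x hx
          rw [interior_Icc] at hx
          have := etaneg x ⟨hx.1, lt_of_lt_of_le hx.2 hc1 |> fun _ => hx.2⟩
          · exact mul_nonpos_iff.2 (Or.inl ⟨by linarith, this⟩)
      intro s hs
      have hb0 : 0 ≤ s / c := div_nonneg hs.1 hc0
      have hb1 : s / c ≤ 1 := by
        rw [div_le_one hc0']; exact hs.2
      have hcomb := hconc.2 (left_mem_Icc.2 (by linarith)) (right_mem_Icc.2 (by linarith))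
        (show 0 ≤ 1 - s/c by linarith) hb0 (by ring)
      simp only [smul_eq_mul, mul_zero, zero_add, N0] at hcomb
      have heq : (s / c) * c = s := by field_simp
      rw [heq] at hcomb
      have hNc : 0 ≤ myN q C c := NA c (left_mem_Icc.2 hc1)
      nlinarith [hcomb, hNc, hb0]
  -- conclude
  have hN : 0 ≤ myN q C t := by
    rcases le_total t c with htc | htc
    · exact NB t ⟨ht0, htc⟩
    · exact NA t ⟨htc, ht1⟩
  simp only [myN] at hN
  linarith

lemma my_ineq_S_le {q : ℝ} (hq : 3 < q) {x y : ℝ} (hx : 0 ≤ x) (hxy : x ≤ y) :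
    (x + y) ^ q ≤ x ^ q + y ^ q + ((2:ℝ) ^ (q-1) - 1) * (x ^ (q-1) * y + x * y ^ (q-1)) := by
  have hy : 0 ≤ y := le_trans hx hxy
  rcases eq_or_lt_of_le hy with hy0 | hy0
  · have hx0 : x = 0 := le_antisymm (hxy.trans hy0.symm.le) hx
    rw [hx0, ← hy0]
    norm_num [Real.zero_rpow (show q ≠ 0 by positivity)]
  · set t : ℝ := x / y with htdef
    have ht0 : 0 ≤ t := div_nonneg hx hy0.le
    have ht1 : t ≤ 1 := by rw [htdef, div_le_one hy0]; exact hxy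
    have hN := my_ineq_N hq ht0 ht1
    have hyq : (0:ℝ) < y ^ q := Real.rpow_pos_of_pos hy0 _
    have hmul := mul_le_mul_of_nonneg_left hN hyq.le
    have e1 : y ^ q * (1+t) ^ q = (x+y) ^ q := by
      rw [← Real.mul_rpow hy0.le (by positivity)]
      congr 1
      rw [htdef]
      field_simp
      ring
    have e2 : y ^ q * t ^ q = x ^ q := by
      rw [← Real.mul_rpow hy0.le ht0]
      congr 1
      rw [htdef, mul_div_cancel₀ _ hy0.ne']
    have e3 : y ^ q * t = x * y ^ (q-1) := by
      rw [htdef, Real.rpow_sub_one hy0.ne']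
      field_simp
    have e4 : y ^ q * t ^ (q-1) = x ^ (q-1) * y := by
      have : y ^ q = y ^ (q-1) * y := by
        rw [← Real.rpow_add_one hy0.ne']; ring_nf
      rw [this, htdef, Real.div_rpow hx hy0.le]
      rw [div_eq_mul_inv, ← Real.rpow_neg hy0.le]
      rw [show y ^ (q-1) * y * (x ^ (q-1) * y ^ (-(q-1))) =
        x ^ (q-1) * y * (y ^ (q-1) * y ^ (-(q-1))) by ring]
      rw [← Real.rpow_add hy0]
      simp
    calc (x+y) ^ q = y ^ q * (1+t) ^ q := e1.symm
      _ ≤ y ^ q * (1 + t ^ q + ((2:ℝ) ^ (q-1) - 1) * (t + t ^ (q-1))) := hmul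
      _ = y ^ q + y ^ q * t ^ q + ((2:ℝ) ^ (q-1) - 1) * (y ^ q * t + y ^ q * t ^ (q-1)) := by ring
      _ = x ^ q + y ^ q + ((2:ℝ) ^ (q-1) - 1) * (x ^ (q-1) * y + x * y ^ (q-1)) := by
          rw [e2, e3, e4]; ring

lemma my_ineq_S {q : ℝ} (hq : 3 < q) {x y : ℝ} (hx : 0 ≤ x) (hy : 0 ≤ y) :
    (x + y) ^ q ≤ x ^ q + y ^ q + ((2:ℝ) ^ (q-1) - 1) * (x ^ (q-1) * y + x * y ^ (q-1)) := by
  rcases le_total x y with h | h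
  · exact my_ineq_S_le hq hx h
  · have := my_ineq_S_le hq hy h
    rw [show y + x = x + y by ring] at this
    linarith

lemma my_key {p : ℝ} (hp : 1 < p) {cp : ℝ} (hcp : cp = if p ≤ 2 then p else 2 ^ p - 2)
    {x y : ℝ} (hx : 0 ≤ x) (hy : 0 ≤ y) :
    (x + y) * ((x + y) ^ p - x ^ p - y ^ p) ≤ cp * (x ^ p * y + x * y ^ p) := by
  have hp1 : p + 1 ≠ 0 := by positivity
  have hmain : (x + y) ^ (p+1) ≤ x ^ (p+1) + y ^ (p+1) + (cp+1) * (x ^ p * y + x * y ^ p) := by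
    rcases le_or_gt p 2 with h2 | h2
    · rw [hcp, if_pos h2]
      exact my_ineq_V hp h2 hx hy
    · rw [hcp, if_neg (not_le.2 h2)]
      have := my_ineq_S (show (3:ℝ) < p + 1 by linarith) hx hy
      rw [show p + 1 - 1 = p by ring] at this
      calc (x+y) ^ (p+1) ≤ x ^ (p+1) + y ^ (p+1) + ((2:ℝ) ^ p - 1) * (x ^ p * y + x * y ^ p) :=
            this
        _ = x ^ (p+1) + y ^ (p+1) + ((2:ℝ) ^ p - 2 + 1) * (x ^ p * y + x * y ^ p) := by ring
  have exy : (x+y) * (x+y) ^ p = (x+y) ^ (p+1) := my_mul_rpow (by linarith) hp1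
  have ex : x * x ^ p = x ^ (p+1) := my_mul_rpow hx hp1
  have ey : y * y ^ p = y ^ (p+1) := my_mul_rpow hy hp1
  nlinarith [hmain, exy, ex, ey]

theorem stmt_18
    (p : ℝ) (hp : 1 < p)
    (cp : ℝ) (hcp : cp = if p ≤ 2 then p else 2 ^ p - 2)
    (μ : ℝ) (hμ : 0 < μ)
    (k : ℕ → ℕ → ℝ)
    (hknonneg : ∀ n j, 0 ≤ k n j)
    (hksymm : ∀ n j, k n j = k j n)
    (hkbound : ∀ n j : ℕ, 1 ≤ n → 1 ≤ j → k n j ≤ μ * ((n : ℝ) + (j : ℝ)))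
    (u : ℕ → ℝ) (hu : ∀ n, 0 ≤ u n)
    (M₁ : ℝ)
    (hM₁sum : Summable (fun n : ℕ => ((n + 1 : ℕ) : ℝ) * u (n + 1)))
    (hM₁ : ∑' n : ℕ, ((n + 1 : ℕ) : ℝ) * u (n + 1) ≤ M₁)
    (hpsum : Summable (fun n : ℕ => ((n + 1 : ℕ) : ℝ) ^ p * u (n + 1))) :
    Summable (fun q : ℕ × ℕ =>
      ((((q.1 + 1 : ℕ) : ℝ) + ((q.2 + 1 : ℕ) : ℝ)) ^ p
          - ((q.1 + 1 : ℕ) : ℝ) ^ p - ((q.2 + 1 : ℕ) : ℝ) ^ p)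
        * k (q.1 + 1) (q.2 + 1) * u (q.1 + 1) * u (q.2 + 1)) ∧
    (1/2) * ∑' q : ℕ × ℕ,
      ((((q.1 + 1 : ℕ) : ℝ) + ((q.2 + 1 : ℕ) : ℝ)) ^ p
          - ((q.1 + 1 : ℕ) : ℝ) ^ p - ((q.2 + 1 : ℕ) : ℝ) ^ p)
        * k (q.1 + 1) (q.2 + 1) * u (q.1 + 1) * u (q.2 + 1)
      ≤ cp * μ * M₁ * ∑' n : ℕ, ((n + 1 : ℕ) : ℝ) ^ p * u (n + 1) := by
  have hcp0 : 0 < cp := by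
    rw [hcp]
    split_ifs with h2
    · linarith
    · have : (2:ℝ) ^ (2:ℝ) ≤ (2:ℝ) ^ p := by
        apply Real.rpow_le_rpow_left_iff (x := 2) one_lt_two |>.2
        linarith
      have h4 : (2:ℝ) ^ (2:ℝ) = 4 := by
        rw [show (2:ℝ) = ((2:ℕ):ℝ) by norm_num, Real.rpow_natCast]
        norm_num
      linarith [h4 ▸ this]
  -- abbreviations
  set a : ℕ → ℝ := fun n => ((n + 1 : ℕ) : ℝ) ^ p * u (n + 1) with hadef
  set b : ℕ → ℝ := fun n => ((n + 1 : ℕ) : ℝ) * u (n + 1) with hbdef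
  have ha0 : ∀ n, 0 ≤ a n := fun n =>
    mul_nonneg (Real.rpow_nonneg (by positivity) _) (hu _)
  have hb0 : ∀ n, 0 ≤ b n := fun n => mul_nonneg (by positivity) (hu _)
  set f : ℕ × ℕ → ℝ := fun q =>
      ((((q.1 + 1 : ℕ) : ℝ) + ((q.2 + 1 : ℕ) : ℝ)) ^ p
          - ((q.1 + 1 : ℕ) : ℝ) ^ p - ((q.2 + 1 : ℕ) : ℝ) ^ p)
        * k (q.1 + 1) (q.2 + 1) * u (q.1 + 1) * u (q.2 + 1) with hfdef
  set g : ℕ × ℕ → ℝ := fun q => cp * μ * (a q.1 * b q.2 + b q.1 * a q.2) with hgdef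
  have hf0 : ∀ q, 0 ≤ f q := by
    intro q
    have hbr : 0 ≤ (((q.1 + 1 : ℕ) : ℝ) + ((q.2 + 1 : ℕ) : ℝ)) ^ p
        - ((q.1 + 1 : ℕ) : ℝ) ^ p - ((q.2 + 1 : ℕ) : ℝ) ^ p := by
      have := my_rpow_superadd (le_of_lt hp) (show (0:ℝ) ≤ ((q.1 + 1 : ℕ) : ℝ) by positivity)
        (show (0:ℝ) ≤ ((q.2 + 1 : ℕ) : ℝ) by positivity)
      linarith
    exact mul_nonneg (mul_nonneg (mul_nonneg hbr (hknonneg _ _)) (hu _)) (hu _)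
  have hfg : ∀ q, f q ≤ g q := by
    intro q
    set X : ℝ := ((q.1 + 1 : ℕ) : ℝ) with hXdef
    set Y : ℝ := ((q.2 + 1 : ℕ) : ℝ) with hYdef
    have hX0 : 0 ≤ X := by positivity
    have hY0 : 0 ≤ Y := by positivity
    have hbr : 0 ≤ (X + Y) ^ p - X ^ p - Y ^ p := by
      have := my_rpow_superadd (le_of_lt hp) hX0 hY0
      linarith
    have huu : 0 ≤ u (q.1 + 1) * u (q.2 + 1) := mul_nonneg (hu _) (hu _)
    have hk : k (q.1 + 1) (q.2 + 1) ≤ μ * (X + Y) := hkbound _ _ (Nat.le_add_left 1 q.1)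
      (Nat.le_add_left 1 q.2)
    have hkey := my_key hp hcp (x := X) (y := Y) hX0 hY0
    have step1 : f q ≤ ((X + Y) ^ p - X ^ p - Y ^ p) * (μ * (X + Y))
        * (u (q.1 + 1) * u (q.2 + 1)) := by
      have : f q = ((X + Y) ^ p - X ^ p - Y ^ p) * k (q.1 + 1) (q.2 + 1)
          * (u (q.1 + 1) * u (q.2 + 1)) := by simp only [hfdef]; ring
      rw [this]
      apply mul_le_mul_of_nonneg_right _ huu
      exact mul_le_mul_of_nonneg_left hk hbr
    have step2 : ((X + Y) ^ p - X ^ p - Y ^ p) * (μ * (X + Y))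
        * (u (q.1 + 1) * u (q.2 + 1)) ≤ μ * (cp * (X ^ p * Y + X * Y ^ p))
        * (u (q.1 + 1) * u (q.2 + 1)) := by
      apply mul_le_mul_of_nonneg_right _ huu
      have : ((X + Y) ^ p - X ^ p - Y ^ p) * (μ * (X + Y))
          = μ * ((X + Y) * ((X + Y) ^ p - X ^ p - Y ^ p)) := by ring
      rw [this]
      exact mul_le_mul_of_nonneg_left hkey hμ.le
    have step3 : μ * (cp * (X ^ p * Y + X * Y ^ p)) * (u (q.1 + 1) * u (q.2 + 1)) = g q := by
      simp only [hgdef, hadef, hbdef]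
      ring
    linarith [step1, step2, step3]
  have hgsum : Summable g := by
    apply Summable.mul_left
    exact (hpsum.mul_of_nonneg hM₁sum ha0 hb0).add (hM₁sum.mul_of_nonneg hpsum hb0 ha0)
  have hfsum : Summable f := Summable.of_nonneg_of_le hf0 hfg hgsum
  refine ⟨hfsum, ?_⟩
  have htsum_le : ∑' q, f q ≤ ∑' q, g q := Summable.tsum_le_tsum hfg hfsum hgsum
  have hab : ∑' (q : ℕ × ℕ), a q.1 * b q.2 = (∑' n, a n) * (∑' n, b n) :=
    (Summable.tsum_mul_tsum hpsum hM₁sum (hpsum.mul_of_nonneg hM₁sum ha0 hb0)).symm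
  have hba : ∑' (q : ℕ × ℕ), b q.1 * a q.2 = (∑' n, b n) * (∑' n, a n) :=
    (Summable.tsum_mul_tsum hM₁sum hpsum (hM₁sum.mul_of_nonneg hpsum hb0 ha0)).symm
  have hgtsum : ∑' q, g q = cp * μ * ((∑' n, a n) * (∑' n, b n) + (∑' n, b n) * (∑' n, a n)) := by
    rw [hgdef]
    rw [tsum_mul_left]
    congr 1
    rw [Summable.tsum_add (hpsum.mul_of_nonneg hM₁sum ha0 hb0) (hM₁sum.mul_of_nonneg hpsum hb0 ha0)]
    rw [hab, hba]
  have hA0 : 0 ≤ ∑' n, a n := tsum_nonneg ha0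
  have hB0 : 0 ≤ ∑' n, b n := tsum_nonneg hb0
  have hBM : ∑' n, b n ≤ M₁ := hM₁
  calc (1/2) * ∑' q, f q ≤ (1/2) * ∑' q, g q := by linarith [htsum_le]
    _ = cp * μ * ((∑' n, b n) * (∑' n, a n)) := by rw [hgtsum]; ring
    _ ≤ cp * μ * (M₁ * (∑' n, a n)) := by
        apply mul_le_mul_of_nonneg_left _ (by positivity : 0 ≤ cp * μ)
        exact mul_le_mul_of_nonneg_right hBM hA0
    _ = cp * μ * M₁ * ∑' n, a n := by ring
end
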